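/- arXiv:hep-th/9508079 — 5 statements merged into one kernel-verified Lean document; each statement's English description precedes it below -/
import Mathlib

section
/- (Andrews–Baxter–Forrester) For all integers r ≥ 3, L ≥ 0, 1 ≤ a, b, c ≤ r−1 with c = b ± 1 and L + a − b even, the configuration sum satisfies X_L(a,b,c) = q^{(a−b)(a−c)/4} Σ_{j=−∞}^{∞} { q^{j(r(r−1)j + r(b+c−1)/2 − (r−1)a)} [ L ; (1/2)(L+a−b) − rj ] − q^{((r−1)j + (b+c−1)/2)(rj+a)} [ L ; (1/2)(L−a−b) − rj ] }, where only finitely many terms of the sum over j are nonzero. -/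
attribute [local instance] Classical.propDecidable

noncomputable section

variable {K : Type*} [Field K]

/-- `(q)_n` where `q = t^4` (the variable `t` stands for `q^{1/4}`). -/
def qp (t : K) (n : ℕ) : K :=
  ∏ k ∈ Finset.range n, (1 - t ^ (4 * (k + 1)))

/-- Gaussian polynomial `[N; m]` in the variable `q = t^4`. -/
def gauss (t : K) (N m : ℤ) : K :=
  if 0 ≤ m ∧ m ≤ N then qp t N.toNat / (qp t m.toNat * qp t (N - m).toNat) else 0

/-- Gaussian polynomial `[N2/2; m]` (zero if `N2` is odd). -/
def gaussHalf (t : K) (N2 m : ℤ) : K :=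
  if N2 % 2 = 0 then gauss t (N2 / 2) m else 0

/-- Incidence matrix of the Dynkin diagram `A_d` (indices `i : Fin d` stand for `i+1`). -/
def inc (d : ℕ) (i k : Fin d) : ℤ := if (i : ℕ) + 1 = (k : ℕ) ∨ (k : ℕ) + 1 = (i : ℕ) then 1 else 0

/-- Cartan matrix of `A_d`. -/
def cartan (d : ℕ) (i k : Fin d) : ℤ := (if i = k then 2 else 0) - inc d i k

/-- the `s`-th unit vector, with the convention `e_0 = e_{d+1} = 0`. -/
def uv (d : ℕ) (s : ℤ) (i : Fin d) : ℤ := if ((i : ℕ) : ℤ) + 1 = s then 1 else 0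

/-- `m_s`, with the conventions `m_0 = m_{d+1} = 0`. -/
def mAt (d : ℕ) (m : Fin d → ℕ) (s : ℤ) : ℤ := ∑ i, uv d s i * (m i : ℤ)

/-- `mᵀ C m` for the `A_d` Cartan matrix. -/
def quadC (d : ℕ) (m : Fin d → ℕ) : ℤ := ∑ i, ∑ k, (m i : ℤ) * cartan d i k * (m k : ℤ)

/-- the vector `Q_{a,b}`. -/
def Qab (r a b : ℕ) (i : Fin (r - 3)) : ℕ :=
  min (a - 1) (r - ((i : ℕ) + 1) - 2) + min (b - 1) (r - ((i : ℕ) + 1) - 2)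

/-- the parity restriction `m ≡ Q_{a,b} (mod 2)`. -/
def parity (r a b : ℕ) (m : Fin (r - 3) → ℕ) : Prop := ∀ i, m i % 2 = Qab r a b i % 2

/-- `(I m + L e_1 + e_{r-a-1} + e_{r-b-1})_i`. -/
def topE (r a b L : ℕ) (m : Fin (r - 3) → ℕ) (i : Fin (r - 3)) : ℤ :=
  (∑ k, inc (r - 3) i k * (m k : ℤ)) + (L : ℤ) * uv (r - 3) 1 i
    + uv (r - 3) ((r : ℤ) - a - 1) i + uv (r - 3) ((r : ℤ) - b - 1) i

/-- the summand `q^{(1/4) mᵀCm - (1/2) m_{r-a-1}} ∏_j [(1/2)(Im + Le_1 + e_{r-a-1} + e_{r-b-1})_j; m_j]`,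
in the variable `t = q^{1/4}`. -/
def fermTerm (r a b L : ℕ) (t : K) (m : Fin (r - 3) → ℕ) : K :=
  t ^ (quadC (r - 3) m - 2 * mAt (r - 3) m ((r : ℤ) - a - 1))
    * ∏ i, gaussHalf t (topE r a b L m i) (m i)

/-- the fermionic sum `Σ_{m ≡ Q_{a,b}} (⋯)`. -/
def fermSum (r a b L : ℕ) (t : K) : K :=
  ∑ᶠ m : Fin (r - 3) → ℕ, if parity r a b m then fermTerm r a b L t m else 0

/-- The one-dimensional configuration sum `X_L(a,b,c)` of the ABF model:
the sum over all sequences `σ_0,…,σ_{L+1}` with values in `{0,…,r-2}`,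
`|σ_{j+1} - σ_j| = 1`, `σ_0 = a-1`, `σ_L = b-1`, `σ_{L+1} = c-1`, of
`t^(Σ_{k=1}^L k|σ_{k+1} - σ_{k-1}|)`, where `t = q^{1/4}`. -/
def conf (r L a b c : ℕ) : RatFunc ℚ :=
  ∑ σ : Fin (L + 2) → Fin (r - 1),
    (fun s : ℕ → ℤ =>
      if (∀ j, j ≤ L → |s (j + 1) - s j| = 1) ∧
          s 0 = (a : ℤ) - 1 ∧ s L = (b : ℤ) - 1 ∧ s (L + 1) = (c : ℤ) - 1
      then (RatFunc.X : RatFunc ℚ) ^ (∑ k ∈ Finset.Icc 1 L, (k : ℤ) * |s (k + 1) - s (k - 1)|)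
      else 0)
    (fun j => if h : j < L + 2 then ((σ ⟨j, h⟩ : ℕ) : ℤ) else 0)

/-!
Both sides satisfy the same recursion in `L`. Splitting off the last step of a path gives
`X_{L+1}(a,b,c) = X_L(a,c,b) + q^{(L+1)/2} X_L(a,d,b)` with `d = 2b - c`, because the new
contribution `(L+1)|σ_{L+2} - σ_L|/4` is `0` or `(L+1)/2`; the two `q`-Pascal rules give the
bosonic side the same recursion. When `d` leaves `{1, …, r-1}` the configuration sum vanishes,
and so does the bosonic sum, its two halves being exchanged by `j ↦ -j` or `j ↦ -j - 1`.
At `L = 0` both sides are `δ_{ab}`.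
-/

lemma qp_zero (t : K) : qp t 0 = 1 :=
  Finset.prod_range_zero _

lemma qp_succ (t : K) (n : ℕ) : qp t (n + 1) = qp t n * (1 - t ^ (4 * (n + 1))) :=
  Finset.prod_range_succ _ _

lemma gauss_eq_zero {t : K} {N m : ℤ} (h : m < 0 ∨ N < m) : gauss t N m = 0 :=
  if_neg (by omega)

lemma gauss_symm (t : K) (N m : ℤ) : gauss t N m = gauss t N (N - m) := by
  unfold gauss
  by_cases h : 0 ≤ m ∧ m ≤ N
  · rw [if_pos h, if_pos (by omega), sub_sub_cancel, mul_comm]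
  · rw [if_neg h, if_neg (by omega)]

lemma gauss_zero_left (t : K) (m : ℤ) : gauss t 0 m = if m = 0 then 1 else 0 := by
  by_cases h : m = 0 <;> simp [gauss, qp, h]
  omega

lemma gauss_natCast (t : K) {n k : ℕ} (h : k ≤ n) :
    gauss t n k = qp t n / (qp t k * qp t (n - k)) := by
  rw [gauss, if_pos (by omega), Int.toNat_natCast, Int.toNat_natCast, ← Nat.cast_sub h,
    Int.toNat_natCast]

lemma gauss_zero_sub_mul_eq_zero {t : K} {r v x : ℤ} (hv : |v| < r) (hx : x ≠ 0) :
    gauss t 0 (v - r * x) = 0 := by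
  rw [gauss_zero_left, if_neg]
  intro h
  rw [abs_lt] at hv
  rcases hx.lt_or_gt with hx | hx <;> nlinarith

section Pascal

variable {t : K}

lemma gauss_zero_right (ht : ∀ n, qp t n ≠ 0) {N : ℤ} (hN : 0 ≤ N) : gauss t N 0 = 1 := by
  lift N to ℕ using hN
  rw [← Nat.cast_zero, gauss_natCast t (Nat.zero_le N), qp_zero, one_mul,
    Nat.sub_zero, div_self (ht N)]

lemma gauss_self (ht : ∀ n, qp t n ≠ 0) {N : ℤ} (hN : 0 ≤ N) : gauss t N N = 1 := by
  rw [gauss_symm, sub_self, gauss_zero_right ht hN]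

lemma gauss_succ_natCast_succ (ht : ∀ n, qp t n ≠ 0) (j l : ℕ) :
    gauss t ((j + l + 1 : ℕ) + 1) (j + 1 : ℕ)
      = gauss t (j + l + 1 : ℕ) (j + 1 : ℕ) + t ^ (4 * (l + 1)) * gauss t (j + l + 1 : ℕ) j := by
  rw [← Nat.cast_succ, gauss_natCast t (by omega), gauss_natCast t (by omega),
    gauss_natCast t (by omega), show j + l + 1 + 1 - (j + 1) = l + 1 by omega,
    show j + l + 1 - (j + 1) = l by omega, show j + l + 1 - j = l + 1 by omega,
    qp_succ t (j + l + 1), qp_succ t j, qp_succ t l,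
    show 4 * (j + l + 1 + 1) = 4 * (j + 1) + 4 * (l + 1) by ring, pow_add]
  have hj := right_ne_zero_of_mul (qp_succ t j ▸ ht (j + 1))
  have hl := right_ne_zero_of_mul (qp_succ t l ▸ ht (l + 1))
  have hj₀ := ht j
  have hl₀ := ht l
  field_simp
  ring

lemma gauss_pascal (ht : ∀ n, qp t n ≠ 0) {N : ℤ} (hN : 0 ≤ N) (m : ℤ) :
    gauss t (N + 1) m = gauss t N m + t ^ (4 * (N + 1 - m)) * gauss t N (m - 1) := by
  rcases lt_trichotomy m 0 with hm | rfl | hm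
  · simp [gauss_eq_zero (N := N + 1) (Or.inl hm), gauss_eq_zero (N := N) (Or.inl hm),
      gauss_eq_zero (N := N) (m := m - 1) (by omega)]
  · simp [gauss_zero_right ht hN, gauss_zero_right ht (by omega : 0 ≤ N + 1),
      gauss_eq_zero (N := N) (m := -1) (by omega)]
  rcases lt_trichotomy m (N + 1) with hm' | rfl | hm'
  · lift N to ℕ using hN
    obtain ⟨j, rfl⟩ : ∃ j : ℕ, m = j + 1 := ⟨(m - 1).toNat, by omega⟩
    obtain ⟨l, rfl⟩ : ∃ l : ℕ, N = j + l + 1 := ⟨N - j - 1, by omega⟩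
    have := gauss_succ_natCast_succ ht j l
    push_cast at this ⊢
    rw [this, add_sub_cancel_right,
      show (4 * ((j : ℤ) + l + 1 + 1 - (j + 1))) = ((4 * (l + 1) : ℕ) : ℤ) by push_cast; ring,
      zpow_natCast]
  · simp [gauss_self ht hN, gauss_self ht (by omega : 0 ≤ N + 1),
      gauss_eq_zero (N := N) (m := N + 1) (by omega)]
  · simp [gauss_eq_zero (N := N + 1) (Or.inr hm'), gauss_eq_zero (N := N) (m := m) (by omega),
      gauss_eq_zero (N := N) (m := m - 1) (by omega)]

lemma gauss_pascal' (ht : ∀ n, qp t n ≠ 0) {N : ℤ} (hN : 0 ≤ N) (m : ℤ) :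
    gauss t (N + 1) m = t ^ (4 * m) * gauss t N m + gauss t N (m - 1) := by
  rw [gauss_symm, gauss_pascal ht hN, gauss_symm t N, gauss_symm t N (N + 1 - m - 1)]
  rw [show N - (N + 1 - m) = m - 1 by ring, show N - (N + 1 - m - 1) = m by ring,
    show N + 1 - (N + 1 - m) = m by ring, add_comm]

end Pascal

lemma finsum_eq_add_mul_finsum {α R : Type*} [Semiring R] {f g h : α → R}
    (hg : g.HasFiniteSupport) (hh : h.HasFiniteSupport) (c : R)
    (hfgh : ∀ j, f j = g j + c * h j) :
    ∑ᶠ j, f j = ∑ᶠ j, g j + c * ∑ᶠ j, h j := by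
  rw [mul_finsum' _ _ hh, ← finsum_add_distrib hg (hh.fun_mul_right _)]
  exact finsum_congr hfgh

lemma zpow_mul_zpow_of_add_eq {t : K} (ht : t ≠ 0) {m n m' n' : ℤ} (h : m + n = m' + n') :
    t ^ m * t ^ n = t ^ m' * t ^ n' := by
  rw [← zpow_add₀ ht, ← zpow_add₀ ht, h]

lemma hasFiniteSupport_gauss_sub_mul (t : K) (L m₀ : ℤ) {r : ℤ} (hr : r ≠ 0) :
    (fun j => gauss t L (m₀ - r * j)).HasFiniteSupport := by
  refine ((Set.finite_Icc 0 L).preimage (f := fun j => m₀ - r * j) ?_).subset fun j hj => ?_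
  · exact fun x _ y _ hxy => mul_left_cancel₀ hr (sub_right_injective hxy)
  · by_contra h
    exact hj (gauss_eq_zero (by simp only [Set.mem_preimage, Set.mem_Icc] at h; omega))

/-- The `j`-th term of the bosonic sum, with `B = (b + c - 1) / 2` and `μ = (L + a - b) / 2`. -/
def bosonicTerm (t : K) (r a B L μ j : ℤ) : K :=
  t ^ (4 * (j * (r * (r - 1) * j + r * B - (r - 1) * a))) * gauss t L (μ - r * j)
    - t ^ (4 * (((r - 1) * j + B) * (r * j + a))) * gauss t L (μ - a - r * j)

def bosonicSum (t : K) (r a B L μ : ℤ) : K := ∑ᶠ j, bosonicTerm t r a B L μ j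

lemma hasFiniteSupport_bosonicTerm (t : K) {r : ℤ} (hr : r ≠ 0) (a B L μ : ℤ) :
    (bosonicTerm t r a B L μ).HasFiniteSupport :=
  ((hasFiniteSupport_gauss_sub_mul t L μ hr).fun_mul_right _).sub
    ((hasFiniteSupport_gauss_sub_mul t L (μ - a) hr).fun_mul_right _)

section BosonicSum

variable {t : K} {r : ℤ}

lemma bosonicTerm_succ (ht₀ : t ≠ 0) (ht : ∀ n, qp t n ≠ 0) (a B : ℤ) {L : ℤ} (hL : 0 ≤ L)
    (μ j : ℤ) :
    bosonicTerm t r a B (L + 1) μ j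
      = bosonicTerm t r a B L (μ - 1) j + t ^ (4 * μ) * bosonicTerm t r a (B - 1) L μ j := by
  unfold bosonicTerm
  rw [gauss_pascal' ht hL, gauss_pascal' ht hL, show μ - 1 - r * j = μ - r * j - 1 by ring,
    show μ - 1 - a - r * j = μ - a - r * j - 1 by ring]
  have e₁ := zpow_mul_zpow_of_add_eq ht₀
    (m := 4 * (j * (r * (r - 1) * j + r * B - (r - 1) * a))) (n := 4 * (μ - r * j))
    (m' := 4 * μ) (n' := 4 * (j * (r * (r - 1) * j + r * (B - 1) - (r - 1) * a))) (by ring)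
  have e₂ := zpow_mul_zpow_of_add_eq ht₀
    (m := 4 * (((r - 1) * j + B) * (r * j + a))) (n := 4 * (μ - a - r * j))
    (m' := 4 * μ) (n' := 4 * (((r - 1) * j + (B - 1)) * (r * j + a))) (by ring)
  linear_combination gauss t L (μ - r * j) * e₁ - gauss t L (μ - a - r * j) * e₂

lemma bosonicTerm_succ' (ht₀ : t ≠ 0) (ht : ∀ n, qp t n ≠ 0) (a B : ℤ) {L : ℤ} (hL : 0 ≤ L)
    (μ j : ℤ) :
    bosonicTerm t r a B (L + 1) μ j
      = bosonicTerm t r a B L μ j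
        + t ^ (4 * (L + 1 - μ)) * bosonicTerm t r a (B + 1) L (μ - 1) j := by
  unfold bosonicTerm
  rw [gauss_pascal ht hL, gauss_pascal ht hL, show μ - 1 - r * j = μ - r * j - 1 by ring,
    show μ - 1 - a - r * j = μ - a - r * j - 1 by ring]
  have e₁ := zpow_mul_zpow_of_add_eq ht₀
    (m := 4 * (j * (r * (r - 1) * j + r * B - (r - 1) * a))) (n := 4 * (L + 1 - (μ - r * j)))
    (m' := 4 * (L + 1 - μ)) (n' := 4 * (j * (r * (r - 1) * j + r * (B + 1) - (r - 1) * a)))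
    (by ring)
  have e₂ := zpow_mul_zpow_of_add_eq ht₀
    (m := 4 * (((r - 1) * j + B) * (r * j + a))) (n := 4 * (L + 1 - (μ - a - r * j)))
    (m' := 4 * (L + 1 - μ)) (n' := 4 * (((r - 1) * j + (B + 1)) * (r * j + a))) (by ring)
  linear_combination gauss t L (μ - r * j - 1) * e₁ - gauss t L (μ - a - r * j - 1) * e₂

lemma bosonicSum_succ (ht₀ : t ≠ 0) (ht : ∀ n, qp t n ≠ 0) (hr : r ≠ 0) (a B : ℤ) {L : ℤ}
    (hL : 0 ≤ L) (μ : ℤ) :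
    bosonicSum t r a B (L + 1) μ
      = bosonicSum t r a B L (μ - 1) + t ^ (4 * μ) * bosonicSum t r a (B - 1) L μ :=
  finsum_eq_add_mul_finsum (hasFiniteSupport_bosonicTerm t hr ..)
    (hasFiniteSupport_bosonicTerm t hr ..) _ (bosonicTerm_succ ht₀ ht a B hL μ)

lemma bosonicSum_succ' (ht₀ : t ≠ 0) (ht : ∀ n, qp t n ≠ 0) (hr : r ≠ 0) (a B : ℤ) {L : ℤ}
    (hL : 0 ≤ L) (μ : ℤ) :
    bosonicSum t r a B (L + 1) μ
      = bosonicSum t r a B L μ + t ^ (4 * (L + 1 - μ)) * bosonicSum t r a (B + 1) L (μ - 1) :=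
  finsum_eq_add_mul_finsum (hasFiniteSupport_bosonicTerm t hr ..)
    (hasFiniteSupport_bosonicTerm t hr ..) _ (bosonicTerm_succ' ht₀ ht a B hL μ)

/-- The two halves of the bosonic sum cancel under `j ↦ -j` when `B = 0`. -/
lemma bosonicSum_eq_zero_of_B_eq_zero (hr : r ≠ 0) {a L μ : ℤ} (hμ : 2 * μ = L + a) :
    bosonicSum t r a 0 L μ = 0 := by
  unfold bosonicSum bosonicTerm
  rw [finsum_sub_distrib ((hasFiniteSupport_gauss_sub_mul t L μ hr).fun_mul_right _)
    ((hasFiniteSupport_gauss_sub_mul t L (μ - a) hr).fun_mul_right _), sub_eq_zero,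
    ← finsum_comp_equiv (Equiv.neg ℤ)]
  refine finsum_congr fun j => ?_
  rw [Equiv.neg_apply, gauss_symm t L (μ - r * -j)]
  congr 2
  · ring
  · linear_combination -hμ

/-- The two halves of the bosonic sum cancel under `j ↦ -j - 1` when `B = r - 1`. -/
lemma bosonicSum_eq_zero_of_B_eq (hr : r ≠ 0) {a L μ : ℤ} (hμ : 2 * μ = L + a - r) :
    bosonicSum t r a (r - 1) L μ = 0 := by
  unfold bosonicSum bosonicTerm
  rw [finsum_sub_distrib ((hasFiniteSupport_gauss_sub_mul t L μ hr).fun_mul_right _)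
    ((hasFiniteSupport_gauss_sub_mul t L (μ - a) hr).fun_mul_right _), sub_eq_zero,
    ← finsum_comp_equiv ((Equiv.addRight 1).trans (Equiv.neg ℤ))]
  refine finsum_congr fun j => ?_
  simp only [Equiv.trans_apply, Equiv.coe_addRight, Equiv.neg_apply]
  rw [gauss_symm t L (μ - r * -(j + 1))]
  congr 2
  · ring
  · linear_combination -hμ

lemma bosonicSum_zero {a μ : ℤ} (hμ : |μ| < r) (haμ : 0 < a - μ) (haμ' : a - μ < r) (B : ℤ) :
    bosonicSum t r a B 0 μ = if μ = 0 then 1 else 0 := by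
  rw [bosonicSum, finsum_eq_single _ 0 fun j hj => ?_]
  · simp only [bosonicTerm, gauss_zero_left]
    split_ifs <;> first | omega | simp
  · rw [bosonicTerm, gauss_zero_sub_mul_eq_zero hμ hj,
      gauss_zero_sub_mul_eq_zero (v := μ - a) (by rw [abs_lt]; omega) hj, mul_zero, mul_zero,
      sub_zero]

end BosonicSum

def bosonic (t : K) (r a L b c : ℤ) : K :=
  t ^ ((a - b) * (a - c)) * bosonicSum t r a ((b + c - 1) / 2) L ((L + a - b) / 2)

section Bosonic

variable {t : K} {r a : ℤ}

lemma bosonic_eq {L b c B μ : ℤ} (hB : 2 * B = b + c - 1) (hμ : 2 * μ = L + a - b) :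
    bosonic t r a L b c = t ^ ((a - b) * (a - c)) * bosonicSum t r a B L μ := by
  rw [bosonic, show (b + c - 1) / 2 = B by omega, show (L + a - b) / 2 = μ by omega]

lemma bosonic_succ (ht₀ : t ≠ 0) (ht : ∀ n, qp t n ≠ 0) (hr : r ≠ 0) {L b c : ℤ} (hL : 0 ≤ L)
    (hbc : c = b + 1 ∨ c + 1 = b) (hLab : (L + 1 + a - b) % 2 = 0) :
    bosonic t r a (L + 1) b c
      = bosonic t r a L c b + t ^ (2 * L + 2) * bosonic t r a L (2 * b - c) b := by
  obtain ⟨μ, hμ⟩ : ∃ μ, 2 * μ = L + 1 + a - b := ⟨(L + 1 + a - b) / 2, by omega⟩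
  rcases hbc with rfl | rfl
  · rw [bosonic_eq (B := b) (by omega) hμ, bosonic_eq (B := b) (μ := μ - 1) (by omega) (by omega),
      bosonic_eq (B := b - 1) (μ := μ) (by omega) (by omega),
      bosonicSum_succ ht₀ ht hr a b hL μ]
    have e := zpow_mul_zpow_of_add_eq ht₀ (m := (a - b) * (a - (b + 1))) (n := 4 * μ)
      (m' := 2 * L + 2) (n' := (a - (2 * b - (b + 1))) * (a - b)) (by linear_combination 2 * hμ)
    have e₀ : t ^ ((a - b) * (a - (b + 1))) = t ^ ((a - (b + 1)) * (a - b)) := by rw [mul_comm]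
    linear_combination bosonicSum t r a b L (μ - 1) * e₀ + bosonicSum t r a (b - 1) L μ * e
  · rw [bosonic_eq (B := c) (by omega) hμ, bosonic_eq (B := c) (μ := μ) (by omega) (by omega),
      bosonic_eq (B := c + 1) (μ := μ - 1) (by omega) (by omega),
      bosonicSum_succ' ht₀ ht hr a c hL μ]
    have e := zpow_mul_zpow_of_add_eq ht₀ (m := (a - (c + 1)) * (a - c)) (n := 4 * (L + 1 - μ))
      (m' := 2 * L + 2) (n' := (a - (2 * (c + 1) - c)) * (a - (c + 1)))
      (by linear_combination -2 * hμ)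
    have e₀ : t ^ ((a - (c + 1)) * (a - c)) = t ^ ((a - c) * (a - (c + 1))) := by rw [mul_comm]
    linear_combination bosonicSum t r a c L μ * e₀ + bosonicSum t r a (c + 1) L (μ - 1) * e

lemma bosonic_zero_one_eq_zero (hr : r ≠ 0) {L : ℤ} (hLa : (L + a) % 2 = 0) : bosonic t r a L 0 1 = 0 := by
  rw [bosonic_eq (B := 0) (μ := (L + a) / 2) (by omega) (by omega),
    bosonicSum_eq_zero_of_B_eq_zero hr (by omega), mul_zero]

lemma bosonic_self_sub_one_eq_zero (hr : r ≠ 0) {L : ℤ} (hLa : (L + a - r) % 2 = 0) :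
    bosonic t r a L r (r - 1) = 0 := by
  rw [bosonic_eq (B := r - 1) (μ := (L + a - r) / 2) (by omega) (by omega),
    bosonicSum_eq_zero_of_B_eq hr (by omega), mul_zero]

lemma bosonic_zero {b : ℤ} (c : ℤ) (ha : 1 ≤ a) (ha' : a ≤ r - 1) (hb : 1 ≤ b) (hb' : b ≤ r - 1)
    (hab : (a - b) % 2 = 0) :
    bosonic t r a 0 b c = if a = b then 1 else 0 := by
  rw [bosonic, bosonicSum_zero (by rw [abs_lt]; omega) (by omega) (by omega)]
  split_ifs with h₁ h₂ h₂ <;> first | omega | simp [h₂]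

end Bosonic

def heights (r L : ℕ) (σ : Fin (L + 2) → Fin (r - 1)) (j : ℕ) : ℤ :=
  if h : j < L + 2 then ((σ ⟨j, h⟩ : ℕ) : ℤ) else 0

def energy (L : ℕ) (s : ℕ → ℤ) : ℤ := ∑ k ∈ Finset.Icc 1 L, (k : ℤ) * |s (k + 1) - s (k - 1)|

def confTerm (L a b c : ℕ) (s : ℕ → ℤ) : RatFunc ℚ :=
  if (∀ j, j ≤ L → |s (j + 1) - s j| = 1) ∧
      s 0 = (a : ℤ) - 1 ∧ s L = (b : ℤ) - 1 ∧ s (L + 1) = (c : ℤ) - 1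
  then RatFunc.X ^ energy L s else 0

lemma conf_eq_sum_confTerm (r L a b c : ℕ) :
    conf r L a b c = ∑ σ, confTerm L a b c (heights r L σ) := rfl

section Heights

variable {r L : ℕ}

lemma heights_of_lt (σ : Fin (L + 2) → Fin (r - 1)) {j : ℕ} (hj : j < L + 2) :
    heights r L σ j = σ ⟨j, hj⟩ :=
  dif_pos hj

lemma heights_snoc_of_lt (τ : Fin (L + 2) → Fin (r - 1)) (v : Fin (r - 1)) {j : ℕ}
    (hj : j < L + 2) : heights r (L + 1) (Fin.snoc τ v) j = heights r L τ j := by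
  rw [heights_of_lt _ (by omega), heights_of_lt τ hj,
    show (⟨j, _⟩ : Fin (L + 3)) = Fin.castSucc ⟨j, hj⟩ from rfl, Fin.snoc_castSucc]

lemma heights_snoc_last (τ : Fin (L + 2) → Fin (r - 1)) (v : Fin (r - 1)) :
    heights r (L + 1) (Fin.snoc τ v) (L + 2) = v := by
  rw [heights_of_lt _ (by omega), show (⟨L + 2, _⟩ : Fin (L + 3)) = Fin.last (L + 2) from rfl,
    Fin.snoc_last]

end Heights

lemma energy_succ {L : ℕ} {s s' : ℕ → ℤ} (hs : ∀ j < L + 2, s' j = s j) :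
    energy (L + 1) s' = energy L s + (L + 1) * |s' (L + 2) - s L| := by
  rw [energy, Finset.sum_Icc_succ_top (by omega), energy]
  congr 1
  · refine Finset.sum_congr rfl fun k hk => ?_
    rw [Finset.mem_Icc] at hk
    rw [hs (k + 1) (by omega), hs (k - 1) (by omega)]
  · rw [Nat.add_sub_cancel, hs L (by omega)]
    push_cast
    ring

/-- Appending a step to a path ending at `b` raises its energy by `0` or `2 (L + 1)`, according
as the path came from `c` or from its mirror image `d = 2 b - c`. -/
lemma confTerm_succ {L a b c d : ℕ} (hbc : c = b + 1 ∨ c + 1 = b) (hd : (d : ℤ) = 2 * b - c)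
    {s s' : ℕ → ℤ} (hs : ∀ j < L + 2, s' j = s j) (hc : s' (L + 2) = c - 1) :
    confTerm (L + 1) a b c s'
      = confTerm L a c b s + RatFunc.X ^ (2 * (L : ℤ) + 2) * confTerm L a d b s := by
  have hE := energy_succ hs
  unfold confTerm
  by_cases hW : (∀ j, j ≤ L → |s (j + 1) - s j| = 1) ∧ s 0 = (a : ℤ) - 1 ∧ s (L + 1) = (b : ℤ) - 1
  · obtain ⟨hsteps, hstart, hend⟩ := hW
    have hW' : (∀ j, j ≤ L + 1 → |s' (j + 1) - s' j| = 1) ∧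
        s' 0 = (a : ℤ) - 1 ∧ s' (L + 1) = (b : ℤ) - 1 ∧ s' (L + 1 + 1) = (c : ℤ) - 1 := by
      refine ⟨fun j hj => ?_, by rw [hs 0 (by omega), hstart], by rw [hs _ (by omega), hend], hc⟩
      rcases Nat.lt_or_ge j (L + 1) with hj' | hj'
      · rw [hs _ (by omega), hs _ (by omega)]
        exact hsteps j (by omega)
      · rw [show j = L + 1 by omega, hc, hs _ (by omega), hend, abs_eq zero_le_one]
        omega
    rw [if_pos hW']
    have hlast := hsteps L le_rfl
    rw [hend, abs_eq zero_le_one] at hlast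
    rw [hc] at hE
    obtain hL | hL : s L = c - 1 ∨ s L = d - 1 := by omega
    · rw [if_pos ⟨hsteps, hstart, hL, hend⟩, if_neg (by omega), hE, hL]
      simp
    · rw [if_neg (by omega), if_pos ⟨hsteps, hstart, hL, hend⟩, hE, hL,
        ← zpow_add₀ RatFunc.X_ne_zero, show |(c : ℤ) - 1 - (d - 1)| = 2 by rw [abs_eq zero_le_two]; omega]
      simp only [zero_add]
      congr 1
      ring
  · have hW' : ¬((∀ j, j ≤ L + 1 → |s' (j + 1) - s' j| = 1) ∧
        s' 0 = (a : ℤ) - 1 ∧ s' (L + 1) = (b : ℤ) - 1 ∧ s' (L + 1 + 1) = (c : ℤ) - 1) := by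
      rintro ⟨hsteps, hstart, hend, -⟩
      refine hW ⟨fun j hj => ?_, by rwa [← hs 0 (by omega)], by rwa [← hs (L + 1) (by omega)]⟩
      rw [← hs _ (by omega), ← hs _ (by omega)]
      exact hsteps j (by omega)
    rw [if_neg hW', if_neg fun h => hW ⟨h.1, h.2.1, h.2.2.2⟩,
      if_neg fun h => hW ⟨h.1, h.2.1, h.2.2.2⟩, mul_zero, add_zero]

section Conf

variable {r : ℕ}

lemma conf_succ {L a b c d : ℕ} (hc : 1 ≤ c) (hc' : c ≤ r - 1) (hbc : c = b + 1 ∨ c + 1 = b)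
    (hd : (d : ℤ) = 2 * b - c) :
    conf r (L + 1) a b c
      = conf r L a c b + RatFunc.X ^ (2 * (L : ℤ) + 2) * conf r L a d b := by
  let v₀ : Fin (r - 1) := ⟨c - 1, by omega⟩
  have hterm : ∀ v τ, confTerm (L + 1) a b c (heights r (L + 1) (Fin.snoc τ v))
      = if v = v₀ then confTerm L a c b (heights r L τ)
          + RatFunc.X ^ (2 * (L : ℤ) + 2) * confTerm L a d b (heights r L τ) else 0 := by
    intro v τ
    split_ifs with hv
    · exact confTerm_succ hbc hd (fun j hj => heights_snoc_of_lt τ v hj)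
        (by rw [heights_snoc_last, hv, Fin.val_mk]; omega)
    · refine if_neg fun h => hv (Fin.ext ?_)
      have := h.2.2.2
      rw [heights_snoc_last] at this
      simp only [v₀]
      omega
  rw [conf_eq_sum_confTerm, conf_eq_sum_confTerm, conf_eq_sum_confTerm, Finset.mul_sum,
    ← Finset.sum_add_distrib, ← (Fin.snocEquiv fun _ => Fin (r - 1)).sum_comp,
    Fintype.sum_prod_type]
  change ∑ v, ∑ τ, confTerm (L + 1) a b c (heights r (L + 1) (Fin.snoc τ v)) = _
  simp only [hterm, Finset.sum_ite_irrel, Finset.sum_const_zero, Finset.sum_ite_eq',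
    Finset.mem_univ, if_true]

lemma conf_eq_zero {L a b c : ℕ} (hb : b = 0 ∨ r ≤ b) : conf r L a b c = 0 := by
  rw [conf_eq_sum_confTerm]
  refine Finset.sum_eq_zero fun σ _ => if_neg fun h => ?_
  have := h.2.2.1
  rw [heights_of_lt σ (by omega)] at this
  have := (σ ⟨L, by omega⟩).isLt
  omega

lemma conf_zero {a b c : ℕ} (ha : 1 ≤ a) (ha' : a ≤ r - 1) (hc : 1 ≤ c) (hc' : c ≤ r - 1)
    (hbc : c = b + 1 ∨ c + 1 = b) :
    conf r 0 a b c = if a = b then 1 else 0 := by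
  rw [conf_eq_sum_confTerm]
  split_ifs with hab
  · subst hab
    let σ₀ : Fin 2 → Fin (r - 1) := ![⟨a - 1, by omega⟩, ⟨c - 1, by omega⟩]
    have h₀ : ∀ σ : Fin 2 → Fin (r - 1), heights r 0 σ 0 = σ 0 := fun σ => heights_of_lt σ _
    have h₁ : ∀ σ : Fin 2 → Fin (r - 1), heights r 0 σ 1 = σ 1 := fun σ => heights_of_lt σ _
    rw [Fintype.sum_eq_single σ₀]
    · rw [confTerm, if_pos, energy, Finset.Icc_eq_empty (by omega), Finset.sum_empty, zpow_zero]
      simp only [h₀, h₁, σ₀, Nat.le_zero, forall_eq, zero_add, Matrix.cons_val_zero,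
        Matrix.cons_val_one, abs_eq zero_le_one]
      omega
    · refine fun σ hσ => if_neg fun h => hσ ?_
      funext i
      have := h.2.1
      have := h.2.2.2
      fin_cases i <;> apply Fin.ext <;> simp_all [σ₀] <;> omega
  · refine Finset.sum_eq_zero fun σ _ => if_neg fun h => hab ?_
    have := h.2.1.symm.trans h.2.2.1
    omega

end Conf

lemma qp_X_ne_zero (n : ℕ) : qp (RatFunc.X : RatFunc ℚ) n ≠ 0 := by
  refine Finset.prod_ne_zero_iff.2 fun k _ h => Polynomial.X_pow_sub_C_ne_zero
    (by omega : 0 < 4 * (k + 1)) (1 : ℚ) (RatFunc.algebraMap_injective ℚ ?_)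
  simp only [map_sub, map_pow, RatFunc.algebraMap_X, map_one, map_zero]
  linear_combination -h

theorem conf_eq_bosonic {r a b c L : ℕ} (ha : 1 ≤ a) (ha' : a ≤ r - 1) (hb : 1 ≤ b)
    (hb' : b ≤ r - 1) (hc : 1 ≤ c) (hc' : c ≤ r - 1) (hbc : c = b + 1 ∨ c + 1 = b)
    (hLab : ((L : ℤ) + a - b) % 2 = 0) :
    conf r L a b c = bosonic RatFunc.X r a L b c := by
  induction L generalizing b c with
  | zero =>
    rw [Nat.cast_zero] at hLab ⊢
    rw [conf_zero ha ha' hc hc' hbc, bosonic_zero c (by omega) (by omega) (by omega) (by omega)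
      (by omega)]
    simp
  | succ L ih =>
    obtain ⟨d, hd⟩ : ∃ d : ℕ, (d : ℤ) = 2 * b - c := ⟨2 * b - c, by omega⟩
    rw [conf_succ hc hc' hbc hd, ih hc hc' hb hb' (by omega) (by omega), Nat.cast_succ,
      bosonic_succ RatFunc.X_ne_zero qp_X_ne_zero (by omega) (by omega) (by omega) (by omega),
      ← hd]
    congr 2
    by_cases hd' : 1 ≤ d ∧ d ≤ r - 1
    · exact ih hd'.1 hd'.2 hb hb' (by omega) (by omega)
    · rw [conf_eq_zero (by omega)]
      rcases (by omega : (d = 0 ∧ b = 1) ∨ (d = r ∧ b = r - 1)) with ⟨rfl, rfl⟩ | ⟨rfl, rfl⟩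
      · exact (bosonic_zero_one_eq_zero (by omega) (by omega)).symm
      · rw [Nat.cast_sub (by omega)]
        exact (bosonic_self_sub_one_eq_zero (by omega) (by omega)).symm

theorem abf_bosonic_general (r a b c L : ℕ)
    (ha : 1 ≤ a) (ha' : a ≤ r - 1) (hb : 1 ≤ b) (hb' : b ≤ r - 1)
    (hc : 1 ≤ c) (hc' : c ≤ r - 1) (hbc : c = b + 1 ∨ c + 1 = b)
    (hL : ((L : ℤ) + a - b) % 2 = 0) :
    conf r L a b c
      = (RatFunc.X : RatFunc ℚ) ^ (((a : ℤ) - b) * ((a : ℤ) - c))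
          * ∑ᶠ j : ℤ,
            ((RatFunc.X : RatFunc ℚ) ^
                  (4 * (j * ((r : ℤ) * ((r : ℤ) - 1) * j
                    + (r : ℤ) * (((b : ℤ) + c - 1) / 2) - ((r : ℤ) - 1) * a)))
                * gauss RatFunc.X (L : ℤ) (((L : ℤ) + a - b) / 2 - r * j)
              - (RatFunc.X : RatFunc ℚ) ^
                  (4 * ((((r : ℤ) - 1) * j + ((b : ℤ) + c - 1) / 2) * ((r : ℤ) * j + a)))
                * gauss RatFunc.X (L : ℤ) (((L : ℤ) - a - b) / 2 - r * j)) := by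
  rw [conf_eq_bosonic ha ha' hb hb' hc hc' hbc hL, bosonic, bosonicSum,
    show ((L : ℤ) - a - b) / 2 = ((L : ℤ) + a - b) / 2 - a by omega]
  rfl

/-- **Andrews–Baxter–Forrester**: the bosonic evaluation of the configuration sums
`X_L(a,b,c)`, `c = b ± 1`, stated in the variable `t = q^{1/4}` (all exponents
multiplied by `4`). -/
theorem abf_bosonic (r a b c L : ℕ) (hr : 3 ≤ r)
    (ha : 1 ≤ a) (ha' : a ≤ r - 1) (hb : 1 ≤ b) (hb' : b ≤ r - 1)
    (hc : 1 ≤ c) (hc' : c ≤ r - 1) (hbc : c = b + 1 ∨ c + 1 = b)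
    (hL : ((L : ℤ) + a - b) % 2 = 0) :
    conf r L a b c
      = (RatFunc.X : RatFunc ℚ) ^ (((a : ℤ) - b) * ((a : ℤ) - c))
          * ∑ᶠ j : ℤ,
            ((RatFunc.X : RatFunc ℚ) ^
                  (4 * (j * ((r : ℤ) * ((r : ℤ) - 1) * j
                    + (r : ℤ) * (((b : ℤ) + c - 1) / 2) - ((r : ℤ) - 1) * a)))
                * gauss RatFunc.X (L : ℤ) (((L : ℤ) + a - b) / 2 - r * j)
              - (RatFunc.X : RatFunc ℚ) ^
                  (4 * ((((r : ℤ) - 1) * j + ((b : ℤ) + c - 1) / 2) * ((r : ℤ) * j + a)))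
                * gauss RatFunc.X (L : ℤ) (((L : ℤ) - a - b) / 2 - r * j)) :=
  abf_bosonic_general r a b c L ha ha' hb hb' hc hc' hbc hL
end
end

section
/- Let r ≥ 3, a ∈ {1,…,r−1}, b ∈ {1,…,r−2}, L ≥ 0 be integers and let n_1,…,n_{r−2} be nonnegative integers satisfying the completeness relation a + b − 1 + 2 Σ_{j=1}^{r−2} j n_j = L + 1. Then the minimal-configuration energy E_min := E_a + E_b + Σ_{j=1}^{r−2} Σ_{ℓ=1}^{n_j} E_j( a − 2 + min(b, r−j−1) + 2j(ℓ−1) + 2 Σ_{k=j+1}^{r−2} k n_k ) equals the quadratic form Σ_{j,k=1}^{r−3} ( n_j − (L/2) δ_{j,1} − (1/2) δ_{j,r−b−1} − (1/2) δ_{j,r−a−1} ) · C^{−1}_{j,k} · ( n_k − (L/2) δ_{k,1} − (1/2) δ_{k,r−b−1} + (1/2) δ_{k,r−a−1} ), as an identity of rational numbers. -/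
attribute [local instance] Classical.propDecidable

lemma sum_arith (m : ℕ) (u v : ℚ) :
    ∑ l ∈ Finset.Icc 1 m, (u + v * ((l : ℚ) - 1))
      = (m : ℚ) * u + v * ((m : ℚ) * ((m : ℚ) - 1)) / 2 := by
  induction m with
  | zero => simp
  | succ m ih =>
      rw [Finset.sum_Icc_succ_top (by omega : 1 ≤ m + 1), ih]
      push_cast
      ring

lemma filter_Icc (c N : ℕ) (hc : 1 ≤ c) :
    (Finset.Icc 1 N).filter (fun k => c ≤ k) = Finset.Icc c N := by
  ext k
  simp only [Finset.mem_filter, Finset.mem_Icc]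
  omega

lemma sum_delta {N c : ℕ} (hc : c ∈ Finset.Icc 1 N) (f : ℕ → ℚ) :
    ∑ j ∈ Finset.Icc 1 N, (if j = c then (1:ℚ) else 0) * f j = f c := by
  rw [Finset.sum_eq_single_of_mem c hc]
  · simp
  · intro j _ hj; simp [hj]

lemma sum_delta' (N c : ℕ) (f : ℕ → ℚ) :
    ∑ j ∈ Finset.Icc 1 N, (if j = c then (1:ℚ) else 0) * f j
      = if c ∈ Finset.Icc 1 N then f c else 0 := by
  by_cases hc : c ∈ Finset.Icc 1 N
  · rw [if_pos hc, sum_delta hc]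
  · rw [if_neg hc]
    apply Finset.sum_eq_zero
    intro j hj
    have : j ≠ c := fun h => hc (h ▸ hj)
    simp [this]

lemma sum_ite_const {P : Prop} [Decidable P] (s : Finset ℕ) (f : ℕ → ℚ) :
    ∑ j ∈ s, (if P then f j else 0) = if P then ∑ j ∈ s, f j else 0 := by
  split_ifs <;> simp

lemma shape4 (s : Finset ℕ) (A B C D : ℕ → ℚ) (c : ℚ) :
    ∑ k ∈ s, (A k - c * B k - 1/2 * C k + 1/2 * D k)
      = (∑ k ∈ s, A k) - c * (∑ k ∈ s, B k) - 1/2 * (∑ k ∈ s, C k)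
        + 1/2 * (∑ k ∈ s, D k) := by
  simp [Finset.sum_add_distrib, Finset.sum_sub_distrib, Finset.mul_sum]

lemma shape4' (s : Finset ℕ) (A B C D : ℕ → ℚ) (c : ℚ) :
    ∑ k ∈ s, (A k - c * B k - 1/2 * C k - 1/2 * D k)
      = (∑ k ∈ s, A k) - c * (∑ k ∈ s, B k) - 1/2 * (∑ k ∈ s, C k)
        - 1/2 * (∑ k ∈ s, D k) := by
  simp [Finset.sum_add_distrib, Finset.sum_sub_distrib, Finset.mul_sum]

lemma shape3 (s : Finset ℕ) (A B C : ℕ → ℚ) (c1 c2 : ℚ) :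
    ∑ k ∈ s, (-(c1 * A k) - B k + c2 * C k)
      = -(c1 * ∑ k ∈ s, A k) - (∑ k ∈ s, B k) + c2 * (∑ k ∈ s, C k) := by
  simp [Finset.sum_add_distrib, Finset.sum_sub_distrib, Finset.mul_sum]

lemma dsum_add (s t : Finset ℕ) (A B : ℕ → ℕ → ℚ) :
    ∑ j ∈ s, ∑ k ∈ t, (A j k + B j k)
      = (∑ j ∈ s, ∑ k ∈ t, A j k) + ∑ j ∈ s, ∑ k ∈ t, B j k := by
  rw [← Finset.sum_add_distrib]
  exact Finset.sum_congr rfl fun j _ => by rw [← Finset.sum_add_distrib]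

lemma bilin_expand (N β α : ℕ) (hβ : β ∈ Finset.Icc 1 N) (hα : α ≤ N)
    (M : ℕ → ℕ → ℚ) (hM : ∀ j k, M j k = M k j) (hM0 : M 0 0 = 0)
    (x : ℕ → ℚ) (c : ℚ) :
    ∑ j ∈ Finset.Icc 1 N, ∑ k ∈ Finset.Icc 1 N,
      (x j - c * (if j = 1 then 1 else 0) - 1/2 * (if j = β then 1 else 0)
          - 1/2 * (if j = α then 1 else 0))
        * M j k
        * (x k - c * (if k = 1 then 1 else 0) - 1/2 * (if k = β then 1 else 0)
          + 1/2 * (if k = α then 1 else 0))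
    = (∑ j ∈ Finset.Icc 1 N, ∑ k ∈ Finset.Icc 1 N, M j k * x j * x k)
      - 2*c*(∑ k ∈ Finset.Icc 1 N, M 1 k * x k)
      - (∑ k ∈ Finset.Icc 1 N, M β k * x k)
      + c^2 * M 1 1 + c * M 1 β + 1/4 * M β β - 1/4 * M α α := by
  have h1N : (1:ℕ) ∈ Finset.Icc 1 N := by
    simp only [Finset.mem_Icc] at hβ ⊢; omega
  have hin2 : ∀ j : ℕ, ∑ k ∈ Finset.Icc 1 N,
      (M j k * (x k - c * (if k = 1 then 1 else 0) - 1/2 * (if k = β then 1 else 0)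
          + 1/2 * (if k = α then 1 else 0)))
      = (∑ k ∈ Finset.Icc 1 N, M j k * x k) - c * M j 1 - 1/2 * M j β
        + 1/2 * (if α ∈ Finset.Icc 1 N then M j α else 0) := by
    intro j
    have hpt : ∀ k ∈ Finset.Icc 1 N,
        M j k * (x k - c * (if k = 1 then 1 else 0) - 1/2 * (if k = β then 1 else 0)
          + 1/2 * (if k = α then 1 else 0))
        = (M j k * x k) - c * ((if k = 1 then (1:ℚ) else 0) * M j k)
          - 1/2 * ((if k = β then (1:ℚ) else 0) * M j k)
          + 1/2 * ((if k = α then (1:ℚ) else 0) * M j k) := fun k _ => by ring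
    rw [Finset.sum_congr rfl hpt, shape4, sum_delta h1N (fun k => M j k),
      sum_delta hβ (fun k => M j k), sum_delta' N α (fun k => M j k)]
  have houter : ∑ j ∈ Finset.Icc 1 N, ∑ k ∈ Finset.Icc 1 N,
      (x j - c * (if j = 1 then 1 else 0) - 1/2 * (if j = β then 1 else 0)
          - 1/2 * (if j = α then 1 else 0))
        * M j k
        * (x k - c * (if k = 1 then 1 else 0) - 1/2 * (if k = β then 1 else 0)
          + 1/2 * (if k = α then 1 else 0))
      = ∑ j ∈ Finset.Icc 1 N,
        (x j - c * (if j = 1 then 1 else 0) - 1/2 * (if j = β then 1 else 0)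
          - 1/2 * (if j = α then 1 else 0))
        * ((∑ k ∈ Finset.Icc 1 N, M j k * x k) - c * M j 1 - 1/2 * M j β
          + 1/2 * (if α ∈ Finset.Icc 1 N then M j α else 0)) := by
    apply Finset.sum_congr rfl
    intro j _
    rw [← hin2 j, Finset.mul_sum]
    apply Finset.sum_congr rfl
    intro k _
    ring
  rw [houter]
  have hpt2 : ∀ j ∈ Finset.Icc 1 N,
      (x j - c * (if j = 1 then 1 else 0) - 1/2 * (if j = β then 1 else 0)
          - 1/2 * (if j = α then 1 else 0))
        * ((∑ k ∈ Finset.Icc 1 N, M j k * x k) - c * M j 1 - 1/2 * M j β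
          + 1/2 * (if α ∈ Finset.Icc 1 N then M j α else 0))
      = x j * ((∑ k ∈ Finset.Icc 1 N, M j k * x k) - c * M j 1 - 1/2 * M j β
          + 1/2 * (if α ∈ Finset.Icc 1 N then M j α else 0))
        - c * ((if j = 1 then (1:ℚ) else 0) *
            ((∑ k ∈ Finset.Icc 1 N, M j k * x k) - c * M j 1 - 1/2 * M j β
              + 1/2 * (if α ∈ Finset.Icc 1 N then M j α else 0)))
        - 1/2 * ((if j = β then (1:ℚ) else 0) *
            ((∑ k ∈ Finset.Icc 1 N, M j k * x k) - c * M j 1 - 1/2 * M j β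
              + 1/2 * (if α ∈ Finset.Icc 1 N then M j α else 0)))
        - 1/2 * ((if j = α then (1:ℚ) else 0) *
            ((∑ k ∈ Finset.Icc 1 N, M j k * x k) - c * M j 1 - 1/2 * M j β
              + 1/2 * (if α ∈ Finset.Icc 1 N then M j α else 0))) := fun j _ => by ring
  rw [Finset.sum_congr rfl hpt2, shape4',
    sum_delta h1N (fun j => (∑ k ∈ Finset.Icc 1 N, M j k * x k) - c * M j 1 - 1/2 * M j β
      + 1/2 * (if α ∈ Finset.Icc 1 N then M j α else 0)),
    sum_delta hβ (fun j => (∑ k ∈ Finset.Icc 1 N, M j k * x k) - c * M j 1 - 1/2 * M j β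
      + 1/2 * (if α ∈ Finset.Icc 1 N then M j α else 0)),
    sum_delta' N α (fun j => (∑ k ∈ Finset.Icc 1 N, M j k * x k) - c * M j 1 - 1/2 * M j β
      + 1/2 * (if α ∈ Finset.Icc 1 N then M j α else 0))]
  have hpt3 : ∀ j ∈ Finset.Icc 1 N,
      x j * ((∑ k ∈ Finset.Icc 1 N, M j k * x k) - c * M j 1 - 1/2 * M j β
          + 1/2 * (if α ∈ Finset.Icc 1 N then M j α else 0))
      = (x j * (∑ k ∈ Finset.Icc 1 N, M j k * x k)) - c * (M 1 j * x j)
        - 1/2 * (M β j * x j)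
        + 1/2 * (if α ∈ Finset.Icc 1 N then M α j * x j else 0) := by
    intro j _
    rw [hM 1 j, hM β j]
    by_cases hin : α ∈ Finset.Icc 1 N
    · rw [if_pos hin, if_pos hin, hM α j]; ring
    · rw [if_neg hin, if_neg hin]; ring
  rw [Finset.sum_congr rfl hpt3, shape4, sum_ite_const]
  have hxS : ∑ j ∈ Finset.Icc 1 N, x j * (∑ k ∈ Finset.Icc 1 N, M j k * x k)
      = ∑ j ∈ Finset.Icc 1 N, ∑ k ∈ Finset.Icc 1 N, M j k * x j * x k := by
    apply Finset.sum_congr rfl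
    intro j _
    rw [Finset.mul_sum]
    apply Finset.sum_congr rfl
    intro k _
    ring
  rw [hxS]
  by_cases hin : α ∈ Finset.Icc 1 N
  · simp only [if_pos hin]
    rw [hM β 1, hM α 1, hM α β]
    ring
  · simp only [if_neg hin]
    have hα0 : α = 0 := by
      simp only [Finset.mem_Icc] at hin; omega
    rw [hα0, hM0, hM β 1]
    ring

/-- inverse Cartan kernel -/
def Mker (r : ℕ) (j k : ℕ) : ℚ :=
  if k ≤ j then (k : ℚ) * ((r : ℚ) - j - 2) / ((r : ℚ) - 2)
  else (j : ℚ) * ((r : ℚ) - k - 2) / ((r : ℚ) - 2)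

lemma Mker_symm (r : ℕ) : ∀ j k, Mker r j k = Mker r k j := by
  intro j k
  unfold Mker
  split_ifs with h1 h2 h2
  · have : j = k := by omega
    subst this; rfl
  · rfl
  · rfl
  · omega

lemma Mker_zero (r : ℕ) : Mker r 0 0 = 0 := by simp [Mker]

lemma Mker_1j (r j : ℕ) (hj : 1 ≤ j) :
    Mker r 1 j = ((r : ℚ) - j - 2) / ((r : ℚ) - 2) := by
  unfold Mker
  split_ifs with h
  · have : j = 1 := by omega
    subst this
    push_cast
    ring
  · push_cast
    ring

lemma Mker_cc (r c : ℕ) :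
    Mker r c c = (c : ℚ) * ((r : ℚ) - c - 2) / ((r : ℚ) - 2) := by
  simp [Mker]

lemma ext_kernel (r : ℕ) (hr : 3 ≤ r) (p q : ℕ → ℚ) :
    ∑ j ∈ Finset.Icc 1 (r-3), ∑ k ∈ Finset.Icc 1 (r-3), p j * Mker r j k * q k
      = ∑ j ∈ Finset.Icc 1 (r-2), ∑ k ∈ Finset.Icc 1 (r-2), p j * Mker r j k * q k := by
  have hr2 : ((r - 2 : ℕ) : ℚ) = (r : ℚ) - 2 := by
    rw [Nat.cast_sub (by omega)]
    norm_num
  have hz1 : ∀ k, k ≤ r - 2 → Mker r (r-2) k = 0 := by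
    intro k hk
    unfold Mker
    rw [if_pos hk, hr2]
    ring
  have hz2 : ∀ j, j ≤ r - 2 → Mker r j (r-2) = 0 := fun j hj => by
    rw [Mker_symm, hz1 j hj]
  have hsub : Finset.Icc 1 (r-3) ⊆ Finset.Icc 1 (r-2) :=
    Finset.Icc_subset_Icc_right (by omega)
  have step1 : ∀ j ∈ Finset.Icc 1 (r-3),
      ∑ k ∈ Finset.Icc 1 (r-3), p j * Mker r j k * q k
        = ∑ k ∈ Finset.Icc 1 (r-2), p j * Mker r j k * q k := by
    intro j hj
    apply Finset.sum_subset hsub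
    intro k hk hk'
    simp only [Finset.mem_Icc] at hk hk' hj
    have : k = r - 2 := by omega
    subst this
    rw [hz2 j (by omega)]
    ring
  rw [Finset.sum_congr rfl step1]
  apply Finset.sum_subset hsub
  intro j hj hj'
  simp only [Finset.mem_Icc] at hj hj'
  have : j = r - 2 := by omega
  subst this
  apply Finset.sum_eq_zero
  intro k hk
  simp only [Finset.mem_Icc] at hk
  rw [hz1 k (by omega)]
  ring

set_option maxHeartbeats 1000000

/-- **The minimal-configuration energy of the one-dimensional Fermi-gas** equals the
quadratic form in the inverse Cartan matrix of `A_{r-3}`: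
`E_min = E_a + E_b + Σ_{j=1}^{r-2} Σ_{ℓ=1}^{n_j} E_j(a - 2 + min(b, r-j-1) + 2j(ℓ-1) + 2Σ_{k>j} k n_k)`
equals
`Σ_{j,k=1}^{r-3} (n_j - (L/2)δ_{j,1} - (1/2)δ_{j,r-b-1} - (1/2)δ_{j,r-a-1}) C⁻¹_{j,k}
(n_k - (L/2)δ_{k,1} - (1/2)δ_{k,r-b-1} + (1/2)δ_{k,r-a-1})`. -/
theorem minimal_energy (r a b L : ℕ) (hr : 3 ≤ r) (ha : 1 ≤ a) (ha' : a ≤ r - 1)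
    (hb : 1 ≤ b) (hb' : b ≤ r - 2) (n : ℕ → ℕ)
    (hcomp : (a : ℤ) + b - 1 + 2 * ∑ j ∈ Finset.Icc 1 (r - 2), (j : ℤ) * n j = (L : ℤ) + 1) :
    ((a : ℚ) - 1) * ((a : ℚ) - 2) / 4
      + (((b : ℚ) - 1) * (2 * (a : ℚ) + b - 2) / 4
          + ∑ j ∈ Finset.Icc (r - b) (r - 2), (j : ℚ) * ((b : ℚ) - r + j + 1) * n j)
      + ∑ j ∈ Finset.Icc 1 (r - 2), ∑ l ∈ Finset.Icc 1 (n j),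
          ((j : ℚ) + ((a : ℚ) - 2 + (min b (r - j - 1) : ℕ) + 2 * j * ((l : ℚ) - 1)
              + 2 * ∑ k ∈ Finset.Icc (j + 1) (r - 2), (k : ℚ) * n k)) * ((j : ℚ) - 1)
      = ∑ j ∈ Finset.Icc 1 (r - 3), ∑ k ∈ Finset.Icc 1 (r - 3),
          ((n j : ℚ) - ((L : ℚ) / 2) * (if j = 1 then 1 else 0)
              - (1 / 2) * (if (j : ℤ) = (r : ℤ) - b - 1 then 1 else 0)
              - (1 / 2) * (if (j : ℤ) = (r : ℤ) - a - 1 then 1 else 0))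
            * (if k ≤ j then (k : ℚ) * ((r : ℚ) - j - 2) / ((r : ℚ) - 2)
                else (j : ℚ) * ((r : ℚ) - k - 2) / ((r : ℚ) - 2))
            * ((n k : ℚ) - ((L : ℚ) / 2) * (if k = 1 then 1 else 0)
              - (1 / 2) * (if (k : ℤ) = (r : ℤ) - b - 1 then 1 else 0)
              + (1 / 2) * (if (k : ℤ) = (r : ℤ) - a - 1 then 1 else 0)) := by
  have hden : (r : ℚ) - 2 ≠ 0 := by
    have h3 : (3 : ℚ) ≤ (r : ℚ) := by exact_mod_cast hr
    intro h; linarith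
  have hβmem : (r - 1 - b) ∈ Finset.Icc 1 (r - 2) := by
    simp only [Finset.mem_Icc]; omega
  have hαle : (r - 1 - a) ≤ r - 2 := by omega
  have hβQ : ((r - 1 - b : ℕ) : ℚ) = (r : ℚ) - 1 - b := by
    rw [show r - 1 - b = r - (1 + b) from by omega, Nat.cast_sub (by omega)]
    push_cast; ring
  have hαQ : ((r - 1 - a : ℕ) : ℚ) = (r : ℚ) - 1 - a := by
    rw [show r - 1 - a = r - (1 + a) from by omega, Nat.cast_sub (by omega)]
    push_cast; ring
  -- RHS: convert the integer-cast deltas to ℕ deltas and fold the kernel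
  have hRa : ∑ j ∈ Finset.Icc 1 (r - 3), ∑ k ∈ Finset.Icc 1 (r - 3),
          ((n j : ℚ) - ((L : ℚ) / 2) * (if j = 1 then 1 else 0)
              - (1 / 2) * (if (j : ℤ) = (r : ℤ) - b - 1 then 1 else 0)
              - (1 / 2) * (if (j : ℤ) = (r : ℤ) - a - 1 then 1 else 0))
            * (if k ≤ j then (k : ℚ) * ((r : ℚ) - j - 2) / ((r : ℚ) - 2)
                else (j : ℚ) * ((r : ℚ) - k - 2) / ((r : ℚ) - 2))
            * ((n k : ℚ) - ((L : ℚ) / 2) * (if k = 1 then 1 else 0)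
              - (1 / 2) * (if (k : ℤ) = (r : ℤ) - b - 1 then 1 else 0)
              + (1 / 2) * (if (k : ℤ) = (r : ℤ) - a - 1 then 1 else 0))
      = ∑ j ∈ Finset.Icc 1 (r - 3), ∑ k ∈ Finset.Icc 1 (r - 3),
          ((n j : ℚ) - (L : ℚ) / 2 * (if j = 1 then 1 else 0)
              - 1 / 2 * (if j = r - 1 - b then 1 else 0)
              - 1 / 2 * (if j = r - 1 - a then 1 else 0))
            * Mker r j k
            * ((n k : ℚ) - (L : ℚ) / 2 * (if k = 1 then 1 else 0)
              - 1 / 2 * (if k = r - 1 - b then 1 else 0)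
              + 1 / 2 * (if k = r - 1 - a then 1 else 0)) := by
    apply Finset.sum_congr rfl
    intro j hj
    apply Finset.sum_congr rfl
    intro k hk
    simp only [Finset.mem_Icc] at hj hk
    have e1 : ((j : ℤ) = (r : ℤ) - b - 1) ↔ (j = r - 1 - b) := by omega
    have e2 : ((j : ℤ) = (r : ℤ) - a - 1) ↔ (j = r - 1 - a) := by omega
    have e3 : ((k : ℤ) = (r : ℤ) - b - 1) ↔ (k = r - 1 - b) := by omega
    have e4 : ((k : ℤ) = (r : ℤ) - a - 1) ↔ (k = r - 1 - a) := by omega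
    simp only [Mker, e1, e2, e3, e4]
  have hRb := ext_kernel r hr
    (fun j => ((n j : ℚ) - (L : ℚ) / 2 * (if j = 1 then 1 else 0)
              - 1 / 2 * (if j = r - 1 - b then 1 else 0)
              - 1 / 2 * (if j = r - 1 - a then 1 else 0)))
    (fun k => ((n k : ℚ) - (L : ℚ) / 2 * (if k = 1 then 1 else 0)
              - 1 / 2 * (if k = r - 1 - b then 1 else 0)
              + 1 / 2 * (if k = r - 1 - a then 1 else 0)))
  beta_reduce at hRb
  have hRc := bilin_expand (r - 2) (r - 1 - b) (r - 1 - a) hβmem hαle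
    (Mker r) (Mker_symm r) (Mker_zero r) (fun j => (n j : ℚ)) ((L : ℚ) / 2)
  beta_reduce at hRc
  rw [hRa, hRb, hRc]
  -- LHS: boundary-b sum as an indicator sum
  have hEb : ∑ j ∈ Finset.Icc (r - b) (r - 2), (j : ℚ) * ((b : ℚ) - r + j + 1) * (n j : ℚ)
      = ∑ j ∈ Finset.Icc 1 (r - 2),
          (if r - b ≤ j then (j : ℚ) * ((b : ℚ) - r + j + 1) * (n j : ℚ) else 0) := by
    rw [← filter_Icc (r - b) (r - 2) (by omega), Finset.sum_filter]
  rw [hEb]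
  -- LHS: evaluate the inner l-sums
  have hbulk : ∑ j ∈ Finset.Icc 1 (r - 2), ∑ l ∈ Finset.Icc 1 (n j),
          ((j : ℚ) + ((a : ℚ) - 2 + (min b (r - j - 1) : ℕ) + 2 * j * ((l : ℚ) - 1)
              + 2 * ∑ k ∈ Finset.Icc (j + 1) (r - 2), (k : ℚ) * n k)) * ((j : ℚ) - 1)
      = (∑ j ∈ Finset.Icc 1 (r - 2),
            (((j : ℚ) + ((a : ℚ) - 2 + ((min b (r - j - 1) : ℕ) : ℚ))) * ((j : ℚ) - 1)
              - (j : ℚ) * ((j : ℚ) - 1)) * (n j : ℚ))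
        + (∑ j ∈ Finset.Icc 1 (r - 2), (j : ℚ) * ((j : ℚ) - 1) * (n j : ℚ) ^ 2)
        + ∑ j ∈ Finset.Icc 1 (r - 2), ∑ k ∈ Finset.Icc 1 (r - 2),
            (if j + 1 ≤ k then 2 * ((j : ℚ) - 1) * (k : ℚ) * ((n j : ℚ) * (n k : ℚ)) else 0) := by
    have step : ∀ j ∈ Finset.Icc 1 (r - 2),
        (∑ l ∈ Finset.Icc 1 (n j),
          ((j : ℚ) + ((a : ℚ) - 2 + (min b (r - j - 1) : ℕ) + 2 * j * ((l : ℚ) - 1)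
              + 2 * ∑ k ∈ Finset.Icc (j + 1) (r - 2), (k : ℚ) * n k)) * ((j : ℚ) - 1))
        = ((((j : ℚ) + ((a : ℚ) - 2 + ((min b (r - j - 1) : ℕ) : ℚ))) * ((j : ℚ) - 1)
              - (j : ℚ) * ((j : ℚ) - 1)) * (n j : ℚ))
          + ((j : ℚ) * ((j : ℚ) - 1) * (n j : ℚ) ^ 2)
          + ∑ k ∈ Finset.Icc 1 (r - 2),
            (if j + 1 ≤ k then 2 * ((j : ℚ) - 1) * (k : ℚ) * ((n j : ℚ) * (n k : ℚ)) else 0) := by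
      intro j hj
      have hrow : 2 * ((j : ℚ) - 1) * (n j : ℚ)
            * (∑ k ∈ Finset.Icc (j + 1) (r - 2), (k : ℚ) * (n k : ℚ))
          = ∑ k ∈ Finset.Icc 1 (r - 2),
            (if j + 1 ≤ k then 2 * ((j : ℚ) - 1) * (k : ℚ) * ((n j : ℚ) * (n k : ℚ)) else 0) := by
        rw [← filter_Icc (j + 1) (r - 2) (by omega), Finset.sum_filter, Finset.mul_sum]
        apply Finset.sum_congr rfl
        intro k _
        split_ifs <;> ring
      calc ∑ l ∈ Finset.Icc 1 (n j),
          ((j : ℚ) + ((a : ℚ) - 2 + (min b (r - j - 1) : ℕ) + 2 * j * ((l : ℚ) - 1)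
              + 2 * ∑ k ∈ Finset.Icc (j + 1) (r - 2), (k : ℚ) * n k)) * ((j : ℚ) - 1)
          = ∑ l ∈ Finset.Icc 1 (n j),
            ((((j : ℚ) + ((a : ℚ) - 2 + ((min b (r - j - 1) : ℕ) : ℚ)
                + 2 * ∑ k ∈ Finset.Icc (j + 1) (r - 2), (k : ℚ) * (n k : ℚ))) * ((j : ℚ) - 1))
              + (2 * (j : ℚ) * ((j : ℚ) - 1)) * ((l : ℚ) - 1)) :=
            Finset.sum_congr rfl (fun l _ => by ring)
        _ = (n j : ℚ) * (((j : ℚ) + ((a : ℚ) - 2 + ((min b (r - j - 1) : ℕ) : ℚ)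
                + 2 * ∑ k ∈ Finset.Icc (j + 1) (r - 2), (k : ℚ) * (n k : ℚ))) * ((j : ℚ) - 1))
              + (2 * (j : ℚ) * ((j : ℚ) - 1)) * ((n j : ℚ) * ((n j : ℚ) - 1)) / 2 :=
            sum_arith (n j) _ _
        _ = ((((j : ℚ) + ((a : ℚ) - 2 + ((min b (r - j - 1) : ℕ) : ℚ))) * ((j : ℚ) - 1)
              - (j : ℚ) * ((j : ℚ) - 1)) * (n j : ℚ))
            + ((j : ℚ) * ((j : ℚ) - 1) * (n j : ℚ) ^ 2)
            + 2 * ((j : ℚ) - 1) * (n j : ℚ)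
              * (∑ k ∈ Finset.Icc (j + 1) (r - 2), (k : ℚ) * (n k : ℚ)) := by ring
        _ = _ := by rw [hrow]
    rw [Finset.sum_congr rfl step, Finset.sum_add_distrib, Finset.sum_add_distrib]
  rw [hbulk]
  -- completeness relation over ℚ
  have hLQ : (L : ℚ) = (a : ℚ) + (b : ℚ) - 2
      + 2 * ∑ j ∈ Finset.Icc 1 (r - 2), (j : ℚ) * (n j : ℚ) := by
    have h := congrArg (fun z : ℤ => (z : ℚ)) hcomp
    push_cast at h
    linarith
  rw [hLQ]
  -- constant part
  have hconst : ((a : ℚ) - 1) * ((a : ℚ) - 2) / 4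
        + ((b : ℚ) - 1) * (2 * (a : ℚ) + (b : ℚ) - 2) / 4
      = (((a : ℚ) + (b : ℚ) - 2) / 2) ^ 2 * Mker r 1 1
        + (((a : ℚ) + (b : ℚ) - 2) / 2) * Mker r 1 (r - 1 - b)
        + 1 / 4 * Mker r (r - 1 - b) (r - 1 - b)
        - 1 / 4 * Mker r (r - 1 - a) (r - 1 - a) := by
    rw [Mker_1j r 1 le_rfl, Mker_1j r (r - 1 - b) (by omega), Mker_cc, Mker_cc, hβQ, hαQ]
    push_cast
    field_simp
    ring
  -- linear part
  have hmerge : (∑ j ∈ Finset.Icc 1 (r - 2),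
            (((j : ℚ) + ((a : ℚ) - 2 + ((min b (r - j - 1) : ℕ) : ℚ))) * ((j : ℚ) - 1)
              - (j : ℚ) * ((j : ℚ) - 1)) * (n j : ℚ))
        + (∑ j ∈ Finset.Icc 1 (r - 2),
            (if r - b ≤ j then (j : ℚ) * ((b : ℚ) - r + j + 1) * (n j : ℚ) else 0))
      = ∑ j ∈ Finset.Icc 1 (r - 2),
          ((((j : ℚ) + ((a : ℚ) - 2 + ((min b (r - j - 1) : ℕ) : ℚ))) * ((j : ℚ) - 1)
              - (j : ℚ) * ((j : ℚ) - 1)) * (n j : ℚ)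
            + (if r - b ≤ j then (j : ℚ) * ((b : ℚ) - r + j + 1) * (n j : ℚ) else 0)) :=
    Finset.sum_add_distrib.symm
  have hlin : ∑ j ∈ Finset.Icc 1 (r - 2),
          ((((j : ℚ) + ((a : ℚ) - 2 + ((min b (r - j - 1) : ℕ) : ℚ))) * ((j : ℚ) - 1)
              - (j : ℚ) * ((j : ℚ) - 1)) * (n j : ℚ)
            + (if r - b ≤ j then (j : ℚ) * ((b : ℚ) - r + j + 1) * (n j : ℚ) else 0))
      = -(((a : ℚ) + (b : ℚ) - 2) * ∑ k ∈ Finset.Icc 1 (r - 2), Mker r 1 k * (n k : ℚ))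
        - (∑ k ∈ Finset.Icc 1 (r - 2), Mker r (r - 1 - b) k * (n k : ℚ))
        + (((a : ℚ) + (b : ℚ) - 2) * Mker r 1 1 + Mker r 1 (r - 1 - b))
          * ∑ k ∈ Finset.Icc 1 (r - 2), (k : ℚ) * (n k : ℚ) := by
    have hpt : ∀ j ∈ Finset.Icc 1 (r - 2),
        (((j : ℚ) + ((a : ℚ) - 2 + ((min b (r - j - 1) : ℕ) : ℚ))) * ((j : ℚ) - 1)
              - (j : ℚ) * ((j : ℚ) - 1)) * (n j : ℚ)
            + (if r - b ≤ j then (j : ℚ) * ((b : ℚ) - r + j + 1) * (n j : ℚ) else 0)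
        = -((((a : ℚ) + (b : ℚ) - 2)) * (Mker r 1 j * (n j : ℚ)))
          - Mker r (r - 1 - b) j * (n j : ℚ)
          + (((a : ℚ) + (b : ℚ) - 2) * Mker r 1 1 + Mker r 1 (r - 1 - b))
            * ((j : ℚ) * (n j : ℚ)) := by
      intro j hj
      simp only [Finset.mem_Icc] at hj
      rw [Mker_1j r j hj.1, Mker_1j r 1 le_rfl, Mker_1j r (r - 1 - b) (by omega)]
      by_cases hc : j ≤ r - 1 - b
      · have hmin : min b (r - j - 1) = b := by omega
        rw [hmin, if_neg (show ¬ (r - b ≤ j) by omega)]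
        simp only [Mker]
        rw [if_pos hc, hβQ]
        push_cast
        field_simp [hden]
        ring
      · have hmin : min b (r - j - 1) = r - j - 1 := by omega
        have hc1 : ((r - j - 1 : ℕ) : ℚ) = (r : ℚ) - j - 1 := by
          rw [show r - j - 1 = r - (j + 1) from by omega, Nat.cast_sub (by omega)]
          push_cast; ring
        rw [hmin, hc1, if_pos (show r - b ≤ j by omega)]
        simp only [Mker]
        rw [if_neg hc, hβQ]
        push_cast
        field_simp [hden]
        ring
    rw [Finset.sum_congr rfl hpt, shape3]
  -- quadratic part
  have hquad : (∑ j ∈ Finset.Icc 1 (r - 2), (j : ℚ) * ((j : ℚ) - 1) * (n j : ℚ) ^ 2)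
        + (∑ j ∈ Finset.Icc 1 (r - 2), ∑ k ∈ Finset.Icc 1 (r - 2),
            (if j + 1 ≤ k then 2 * ((j : ℚ) - 1) * (k : ℚ) * ((n j : ℚ) * (n k : ℚ)) else 0))
      = (∑ j ∈ Finset.Icc 1 (r - 2), ∑ k ∈ Finset.Icc 1 (r - 2),
            Mker r j k * (n j : ℚ) * (n k : ℚ))
        - 2 * ((∑ j ∈ Finset.Icc 1 (r - 2), (j : ℚ) * (n j : ℚ))
            * ∑ k ∈ Finset.Icc 1 (r - 2), Mker r 1 k * (n k : ℚ))
        + Mker r 1 1 * (∑ j ∈ Finset.Icc 1 (r - 2), (j : ℚ) * (n j : ℚ)) ^ 2 := by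
    have e1 : (∑ j ∈ Finset.Icc 1 (r - 2), (j : ℚ) * (n j : ℚ))
          * (∑ k ∈ Finset.Icc 1 (r - 2), Mker r 1 k * (n k : ℚ))
        = ∑ j ∈ Finset.Icc 1 (r - 2), ∑ k ∈ Finset.Icc 1 (r - 2),
            ((j : ℚ) * (n j : ℚ)) * (Mker r 1 k * (n k : ℚ)) :=
      Finset.sum_mul_sum _ _ _ _
    have e2 : (∑ j ∈ Finset.Icc 1 (r - 2), Mker r 1 j * (n j : ℚ))
          * (∑ k ∈ Finset.Icc 1 (r - 2), (k : ℚ) * (n k : ℚ))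
        = ∑ j ∈ Finset.Icc 1 (r - 2), ∑ k ∈ Finset.Icc 1 (r - 2),
            (Mker r 1 j * (n j : ℚ)) * ((k : ℚ) * (n k : ℚ)) :=
      Finset.sum_mul_sum _ _ _ _
    have hm11 : Mker r 1 1 * (∑ j ∈ Finset.Icc 1 (r - 2), (j : ℚ) * (n j : ℚ)) ^ 2
        = ∑ j ∈ Finset.Icc 1 (r - 2), ∑ k ∈ Finset.Icc 1 (r - 2),
            Mker r 1 1 * (((j : ℚ) * (n j : ℚ)) * ((k : ℚ) * (n k : ℚ))) := by
      rw [sq, Finset.sum_mul_sum, Finset.mul_sum]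
      apply Finset.sum_congr rfl
      intro j _
      rw [Finset.mul_sum]
    have ediag : (∑ j ∈ Finset.Icc 1 (r - 2), (j : ℚ) * ((j : ℚ) - 1) * (n j : ℚ) ^ 2)
        = ∑ j ∈ Finset.Icc 1 (r - 2), ∑ k ∈ Finset.Icc 1 (r - 2),
            (if k = j then (j : ℚ) * ((j : ℚ) - 1) * (n j : ℚ) ^ 2 else 0) := by
      apply Finset.sum_congr rfl
      intro j hj
      rw [Finset.sum_ite_eq' (Finset.Icc 1 (r - 2)) j
        (fun _ => (j : ℚ) * ((j : ℚ) - 1) * (n j : ℚ) ^ 2), if_pos hj]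
    have esw : ∑ j ∈ Finset.Icc 1 (r - 2), ∑ k ∈ Finset.Icc 1 (r - 2),
          (if k + 1 ≤ j then ((k : ℚ) - 1) * (j : ℚ) * ((n j : ℚ) * (n k : ℚ)) else 0)
        = ∑ j ∈ Finset.Icc 1 (r - 2), ∑ k ∈ Finset.Icc 1 (r - 2),
          (if j + 1 ≤ k then ((j : ℚ) - 1) * (k : ℚ) * ((n j : ℚ) * (n k : ℚ)) else 0) := by
      rw [Finset.sum_comm]
      apply Finset.sum_congr rfl
      intro j _
      apply Finset.sum_congr rfl
      intro k _
      split_ifs <;> ring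
    have ecross : ∑ j ∈ Finset.Icc 1 (r - 2), ∑ k ∈ Finset.Icc 1 (r - 2),
          (if j + 1 ≤ k then 2 * ((j : ℚ) - 1) * (k : ℚ) * ((n j : ℚ) * (n k : ℚ)) else 0)
        = (∑ j ∈ Finset.Icc 1 (r - 2), ∑ k ∈ Finset.Icc 1 (r - 2),
            (if j + 1 ≤ k then ((j : ℚ) - 1) * (k : ℚ) * ((n j : ℚ) * (n k : ℚ)) else 0))
          + ∑ j ∈ Finset.Icc 1 (r - 2), ∑ k ∈ Finset.Icc 1 (r - 2),
            (if k + 1 ≤ j then ((k : ℚ) - 1) * (j : ℚ) * ((n j : ℚ) * (n k : ℚ)) else 0) := by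
      rw [esw, ← dsum_add]
      apply Finset.sum_congr rfl
      intro j _
      apply Finset.sum_congr rfl
      intro k _
      split_ifs <;> ring
    have hsplitL : ∑ j ∈ Finset.Icc 1 (r - 2), ∑ k ∈ Finset.Icc 1 (r - 2),
          ((if k = j then (j : ℚ) * ((j : ℚ) - 1) * (n j : ℚ) ^ 2 else 0)
            + ((if j + 1 ≤ k then ((j : ℚ) - 1) * (k : ℚ) * ((n j : ℚ) * (n k : ℚ)) else 0)
              + (if k + 1 ≤ j then ((k : ℚ) - 1) * (j : ℚ) * ((n j : ℚ) * (n k : ℚ)) else 0)))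
        = (∑ j ∈ Finset.Icc 1 (r - 2), ∑ k ∈ Finset.Icc 1 (r - 2),
            (if k = j then (j : ℚ) * ((j : ℚ) - 1) * (n j : ℚ) ^ 2 else 0))
          + ((∑ j ∈ Finset.Icc 1 (r - 2), ∑ k ∈ Finset.Icc 1 (r - 2),
              (if j + 1 ≤ k then ((j : ℚ) - 1) * (k : ℚ) * ((n j : ℚ) * (n k : ℚ)) else 0))
            + ∑ j ∈ Finset.Icc 1 (r - 2), ∑ k ∈ Finset.Icc 1 (r - 2),
              (if k + 1 ≤ j then ((k : ℚ) - 1) * (j : ℚ) * ((n j : ℚ) * (n k : ℚ)) else 0)) := by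
      rw [dsum_add]
      congr 1
      rw [dsum_add]
    have hkey : ∑ j ∈ Finset.Icc 1 (r - 2), ∑ k ∈ Finset.Icc 1 (r - 2),
          ((if k = j then (j : ℚ) * ((j : ℚ) - 1) * (n j : ℚ) ^ 2 else 0)
            + ((if j + 1 ≤ k then ((j : ℚ) - 1) * (k : ℚ) * ((n j : ℚ) * (n k : ℚ)) else 0)
              + (if k + 1 ≤ j then ((k : ℚ) - 1) * (j : ℚ) * ((n j : ℚ) * (n k : ℚ)) else 0)))
        = ∑ j ∈ Finset.Icc 1 (r - 2), ∑ k ∈ Finset.Icc 1 (r - 2),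
          (Mker r j k * (n j : ℚ) * (n k : ℚ)
            - ((j : ℚ) * (n j : ℚ)) * (Mker r 1 k * (n k : ℚ))
            - (Mker r 1 j * (n j : ℚ)) * ((k : ℚ) * (n k : ℚ))
            + Mker r 1 1 * (((j : ℚ) * (n j : ℚ)) * ((k : ℚ) * (n k : ℚ)))) := by
      apply Finset.sum_congr rfl
      intro j hj
      apply Finset.sum_congr rfl
      intro k hk
      simp only [Finset.mem_Icc] at hj hk
      rw [Mker_1j r k hk.1, Mker_1j r j hj.1, Mker_1j r 1 le_rfl]
      simp only [Mker]
      rcases Nat.lt_trichotomy j k with h | h | h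
      · rw [if_neg (show ¬ k = j by omega), if_pos (show j + 1 ≤ k by omega),
          if_neg (show ¬ k + 1 ≤ j by omega), if_neg (show ¬ k ≤ j by omega)]
        push_cast
        field_simp [hden]
        ring
      · rw [← h]
        rw [if_pos rfl, if_neg (show ¬ j + 1 ≤ j by omega), if_pos (le_refl j)]
        push_cast
        field_simp [hden]
        ring
      · rw [if_neg (show ¬ k = j by omega), if_neg (show ¬ j + 1 ≤ k by omega),
          if_pos (show k + 1 ≤ j by omega), if_pos (show k ≤ j by omega)]
        push_cast
        field_simp [hden]
        ring
    have hsplitR : ∑ j ∈ Finset.Icc 1 (r - 2), ∑ k ∈ Finset.Icc 1 (r - 2),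
          (Mker r j k * (n j : ℚ) * (n k : ℚ)
            - ((j : ℚ) * (n j : ℚ)) * (Mker r 1 k * (n k : ℚ))
            - (Mker r 1 j * (n j : ℚ)) * ((k : ℚ) * (n k : ℚ))
            + Mker r 1 1 * (((j : ℚ) * (n j : ℚ)) * ((k : ℚ) * (n k : ℚ))))
        = (∑ j ∈ Finset.Icc 1 (r - 2), ∑ k ∈ Finset.Icc 1 (r - 2),
            Mker r j k * (n j : ℚ) * (n k : ℚ))
          - (∑ j ∈ Finset.Icc 1 (r - 2), ∑ k ∈ Finset.Icc 1 (r - 2),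
            ((j : ℚ) * (n j : ℚ)) * (Mker r 1 k * (n k : ℚ)))
          - (∑ j ∈ Finset.Icc 1 (r - 2), ∑ k ∈ Finset.Icc 1 (r - 2),
            (Mker r 1 j * (n j : ℚ)) * ((k : ℚ) * (n k : ℚ)))
          + ∑ j ∈ Finset.Icc 1 (r - 2), ∑ k ∈ Finset.Icc 1 (r - 2),
            Mker r 1 1 * (((j : ℚ) * (n j : ℚ)) * ((k : ℚ) * (n k : ℚ))) := by
      have h1 : ∀ j ∈ Finset.Icc 1 (r - 2),
          ∑ k ∈ Finset.Icc 1 (r - 2),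
            (Mker r j k * (n j : ℚ) * (n k : ℚ)
              - ((j : ℚ) * (n j : ℚ)) * (Mker r 1 k * (n k : ℚ))
              - (Mker r 1 j * (n j : ℚ)) * ((k : ℚ) * (n k : ℚ))
              + Mker r 1 1 * (((j : ℚ) * (n j : ℚ)) * ((k : ℚ) * (n k : ℚ))))
          = (∑ k ∈ Finset.Icc 1 (r - 2), Mker r j k * (n j : ℚ) * (n k : ℚ))
            - (∑ k ∈ Finset.Icc 1 (r - 2), ((j : ℚ) * (n j : ℚ)) * (Mker r 1 k * (n k : ℚ)))
            - (∑ k ∈ Finset.Icc 1 (r - 2), (Mker r 1 j * (n j : ℚ)) * ((k : ℚ) * (n k : ℚ)))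
            + ∑ k ∈ Finset.Icc 1 (r - 2),
                Mker r 1 1 * (((j : ℚ) * (n j : ℚ)) * ((k : ℚ) * (n k : ℚ))) := by
        intro j _
        rw [Finset.sum_add_distrib, Finset.sum_sub_distrib, Finset.sum_sub_distrib]
      rw [Finset.sum_congr rfl h1, Finset.sum_add_distrib, Finset.sum_sub_distrib,
        Finset.sum_sub_distrib]
    linear_combination ediag + ecross - hsplitL + hkey + hsplitR + e1 + e2 - hm11
  linear_combination hconst + hmerge + hlin + hquad
end

section
/- Let r ≥ 3, a ∈ {1,…,r−1}, b ∈ {1,…,r−2}, L ≥ 0 be integers and let n_1,…,n_{r−2} be nonnegative integers satisfying a + b − 1 + 2 Σ_{j=1}^{r−2} j n_j = L + 1. Define m_j = 2 Σ_{k=j+1}^{r−2} (k−j) n_k + min(a−1, r−j−2) + min(b−1, r−j−2) for j = 1,…,r−3, and set m_0 = m_{r−2} = 0. Then −m_{j−1} + 2m_j − m_{j+1} = L δ_{j,1} + δ_{j,r−a−1} + δ_{j,r−b−1} − 2 n_j for all j = 1,…,r−3; equivalently, writing n = (n_1,…,n_{r−3}) and m = (m_1,…,m_{r−3}), one has n =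 (1/2)( L e_1 + e_{r−a−1} + e_{r−b−1} − C m ). -/
/-- Second difference of `x ↦ min A (c - x - 2)` picks up a `1` exactly at the kink. -/
private lemma min_second_diff (A c x : ℤ) :
    -min A (c - (x - 1) - 2) + 2 * min A (c - x - 2) - min A (c - (x + 1) - 2)
      = if x = c - A - 2 then 1 else 0 := by
  simp only [min_def]; split_ifs <;> omega

/-- Telescoping step for the weighted sums. -/
private lemma sum_step (n : ℕ → ℕ) (i R : ℕ) (hi : i ≤ R) (x y : ℤ)
    (hx : x = (i : ℤ) - 1) (hy : y = (i : ℤ)) :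
    (∑ k ∈ Finset.Icc i R, ((k : ℤ) - x) * n k)
      - ∑ k ∈ Finset.Icc (i + 1) R, ((k : ℤ) - y) * n k
      = ∑ k ∈ Finset.Icc i R, (n k : ℤ) := by
  subst hx hy
  have hins : Finset.Icc i R = insert i (Finset.Icc (i + 1) R) := by
    ext x; simp only [Finset.mem_Icc, Finset.mem_insert]; omega
  have hnm : i ∉ Finset.Icc (i + 1) R := by
    intro h; simp only [Finset.mem_Icc] at h; omega
  rw [hins, Finset.sum_insert hnm, Finset.sum_insert hnm]
  have key : (∑ k ∈ Finset.Icc (i + 1) R, ((k : ℤ) - ((i : ℤ) - 1)) * n k)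
      - ∑ k ∈ Finset.Icc (i + 1) R, ((k : ℤ) - (i : ℤ)) * n k
      = ∑ k ∈ Finset.Icc (i + 1) R, (n k : ℤ) := by
    rw [← Finset.sum_sub_distrib]
    exact Finset.sum_congr rfl fun k _ => by ring
  linear_combination key

/-- **The relation between occupation numbers `n_j` and the variables `m_j`**:
with `m_j = 2Σ_{k>j}(k-j)n_k + min(a-1,r-j-2) + min(b-1,r-j-2)` and the conventions
`m_0 = m_{r-2} = 0`, one has
`-m_{j-1} + 2m_j - m_{j+1} = L δ_{j,1} + δ_{j,r-a-1} + δ_{j,r-b-1} - 2n_j`,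
i.e. `n = (1/2)(L e_1 + e_{r-a-1} + e_{r-b-1} - C m)` for the `A_{r-3}` Cartan matrix `C`. -/
theorem n_m_relation (r a b L : ℕ) (hr : 3 ≤ r) (ha : 1 ≤ a) (ha' : a ≤ r - 1)
    (hb : 1 ≤ b) (hb' : b ≤ r - 2) (n : ℕ → ℕ)
    (hcomp : (a : ℤ) + b - 1 + 2 * ∑ j ∈ Finset.Icc 1 (r - 2), (j : ℤ) * n j = (L : ℤ) + 1)
    (m : ℕ → ℤ)
    (hm : ∀ j, 1 ≤ j → j ≤ r - 3 →
      m j = 2 * ∑ k ∈ Finset.Icc (j + 1) (r - 2), ((k : ℤ) - j) * n k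
        + min ((a : ℤ) - 1) ((r : ℤ) - j - 2) + min ((b : ℤ) - 1) ((r : ℤ) - j - 2))
    (hm0 : m 0 = 0) (hmtop : m (r - 2) = 0) :
    ∀ j, 1 ≤ j → j ≤ r - 3 →
      -m (j - 1) + 2 * m j - m (j + 1)
        = (L : ℤ) * (if j = 1 then 1 else 0)
          + (if (j : ℤ) = (r : ℤ) - a - 1 then 1 else 0)
          + (if (j : ℤ) = (r : ℤ) - b - 1 then 1 else 0) - 2 * (n j : ℤ) := by
  intro j hj1 hj3
  have hjr2 : j + 1 ≤ r - 2 := by omega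
  -- value of `m j`
  have hmj : m j = 2 * ∑ k ∈ Finset.Icc (j + 1) (r - 2), ((k : ℤ) - (j : ℤ)) * n k
      + min ((a : ℤ) - 1) ((r : ℤ) - (j : ℤ) - 2)
      + min ((b : ℤ) - 1) ((r : ℤ) - (j : ℤ) - 2) := hm j hj1 hj3
  -- value of `m (j+1)`
  have hmj1 : m (j + 1) = 2 * ∑ k ∈ Finset.Icc (j + 2) (r - 2), ((k : ℤ) - ((j : ℤ) + 1)) * n k
      + min ((a : ℤ) - 1) ((r : ℤ) - ((j : ℤ) + 1) - 2)
      + min ((b : ℤ) - 1) ((r : ℤ) - ((j : ℤ) + 1) - 2) := by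
    rcases lt_or_eq_of_le hj3 with h | h
    · have h' := hm (j + 1) (by omega) (by omega)
      have hc : ((j + 1 : ℕ) : ℤ) = (j : ℤ) + 1 := by push_cast; ring
      have hi : j + 1 + 1 = j + 2 := by omega
      rw [hc, hi] at h'
      exact h'
    · -- j = r - 3, so j + 1 = r - 2
      have hj : j + 1 = r - 2 := by omega
      have hjc : (j : ℤ) = (r : ℤ) - 3 := by omega
      rw [hj, hmtop]
      have hempty : Finset.Icc (j + 2) (r - 2) = ∅ := Finset.Icc_eq_empty (by omega)
      have hma : min ((a : ℤ) - 1) ((r : ℤ) - ((j : ℤ) + 1) - 2) = 0 := by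
        have : (1 : ℤ) ≤ (a : ℤ) := by exact_mod_cast ha
        simp only [min_def]; split_ifs <;> omega
      have hmb : min ((b : ℤ) - 1) ((r : ℤ) - ((j : ℤ) + 1) - 2) = 0 := by
        have : (1 : ℤ) ≤ (b : ℤ) := by exact_mod_cast hb
        simp only [min_def]; split_ifs <;> omega
      rw [hempty, hma, hmb]
      simp
  -- value of `m (j-1)` (with the `j = 1` correction term `L`)
  have hmjm : m (j - 1) = 2 * ∑ k ∈ Finset.Icc j (r - 2), ((k : ℤ) - ((j : ℤ) - 1)) * n k
      + min ((a : ℤ) - 1) ((r : ℤ) - ((j : ℤ) - 1) - 2)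
      + min ((b : ℤ) - 1) ((r : ℤ) - ((j : ℤ) - 1) - 2)
      - (if j = 1 then (L : ℤ) else 0) := by
    rcases eq_or_lt_of_le hj1 with h | h
    · -- j = 1
      subst h
      rw [show (1 : ℕ) - 1 = 0 from rfl, hm0, if_pos rfl]
      have hS : ∑ k ∈ Finset.Icc 1 (r - 2), ((k : ℤ) - (((1 : ℕ) : ℤ) - 1)) * n k
          = ∑ k ∈ Finset.Icc 1 (r - 2), (k : ℤ) * n k :=
        Finset.sum_congr rfl fun k _ => by push_cast; ring
      have hma : min ((a : ℤ) - 1) ((r : ℤ) - (((1 : ℕ) : ℤ) - 1) - 2) = (a : ℤ) - 1 := by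
        have h1 : (a : ℤ) ≤ (r : ℤ) - 1 := by omega
        simp only [min_def]; split_ifs <;> omega
      have hmb : min ((b : ℤ) - 1) ((r : ℤ) - (((1 : ℕ) : ℤ) - 1) - 2) = (b : ℤ) - 1 := by
        have h1 : (b : ℤ) ≤ (r : ℤ) - 2 := by omega
        simp only [min_def]; split_ifs <;> omega
      rw [hS, hma, hmb]
      linarith [hcomp]
    · -- j ≥ 2
      have h' := hm (j - 1) (by omega) (by omega)
      have hc : ((j - 1 : ℕ) : ℤ) = (j : ℤ) - 1 := by omega
      have hi : j - 1 + 1 = j := by omega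
      rw [hc, hi] at h'
      rw [h', if_neg (by omega)]
      ring
  -- telescoping of the weighted sums
  have h1 := sum_step n j (r - 2) (by omega) ((j : ℤ) - 1) (j : ℤ) rfl rfl
  have h2 := sum_step n (j + 1) (r - 2) (by omega) (j : ℤ) ((j : ℤ) + 1)
      (by push_cast; ring) (by push_cast; ring)
  have hi2 : j + 1 + 1 = j + 2 := by omega
  rw [hi2] at h2
  -- splitting off the `k = j` term
  have h3 : ∑ k ∈ Finset.Icc j (r - 2), (n k : ℤ)
      = (n j : ℤ) + ∑ k ∈ Finset.Icc (j + 1) (r - 2), (n k : ℤ) := by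
    have hins : Finset.Icc j (r - 2) = insert j (Finset.Icc (j + 1) (r - 2)) := by
      ext x; simp only [Finset.mem_Icc, Finset.mem_insert]; omega
    rw [hins, Finset.sum_insert (by intro h; simp only [Finset.mem_Icc] at h; omega)]
  -- second differences of the min terms
  have hfa := min_second_diff ((a : ℤ) - 1) (r : ℤ) (j : ℤ)
  have hfb := min_second_diff ((b : ℤ) - 1) (r : ℤ) (j : ℤ)
  rw [show ((r : ℤ) - ((a : ℤ) - 1) - 2) = (r : ℤ) - a - 1 from by ring] at hfa
  rw [show ((r : ℤ) - ((b : ℤ) - 1) - 2) = (r : ℤ) - b - 1 from by ring] at hfb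
  -- the `L δ_{j,1}` term
  have hL : (L : ℤ) * (if j = 1 then 1 else 0) = (if j = 1 then (L : ℤ) else 0) := by
    split_ifs <;> ring
  rw [hmjm, hmj, hmj1, hL]
  linarith [h1, h2, h3, hfa, hfb]
end

section
/- For all integers r ≥ 3, a ∈ {1,…,r−1}, b ∈ {1,…,r−2} and L ≥ 1, the configuration sums satisfy the recurrence X_L(a,b) = Y_{L−1}(a,b+1) + q^{L/2} X_{L−1}(a,b−1), where by convention X_{L−1}(a,0) = 0. -/
attribute [local instance] Classical.propDecidable

noncomputable section

variable {K : Type*} [Field K]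

def sfun {n r : ℕ} (σ : Fin n → Fin r) (j : ℕ) : ℤ :=
  if h : j < n then ((σ ⟨j, h⟩ : ℕ) : ℤ) else 0

def cterm (r L a b c : ℕ) (σ : Fin (L + 2) → Fin (r - 1)) : RatFunc ℚ :=
  if (∀ j, j ≤ L → |sfun σ (j + 1) - sfun σ j| = 1) ∧
      sfun σ 0 = (a : ℤ) - 1 ∧ sfun σ L = (b : ℤ) - 1 ∧ sfun σ (L + 1) = (c : ℤ) - 1
  then (RatFunc.X : RatFunc ℚ) ^ (∑ k ∈ Finset.Icc 1 L, (k : ℤ) * |sfun σ (k + 1) - sfun σ (k - 1)|)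
  else 0

lemma cterm_snoc (r M a b : ℕ) (hb : 1 ≤ b) (hb1 : b < r - 1)
    (τ : Fin (M + 2) → Fin (r - 1)) (x : Fin (r - 1)) :
    cterm r (M + 1) a b (b + 1) (Fin.snoc τ x)
      = if (x : ℕ) = b then
          cterm r M a (b + 1) b τ
            + (RatFunc.X : RatFunc ℚ) ^ (2 * (M + 1)) * cterm r M a (b - 1) b τ
        else 0 := by
  have hs : ∀ j, sfun (Fin.snoc τ x : Fin (M + 3) → Fin (r - 1)) j
      = if j = M + 2 then ((x : ℕ) : ℤ) else sfun τ j := by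
    intro j
    unfold sfun
    rcases lt_trichotomy j (M + 2) with h1 | h1 | h1
    · rw [dif_pos (by omega : j < M + 3), dif_pos h1, if_neg (by omega)]
      have h2 : (⟨j, by omega⟩ : Fin (M + 3)) = Fin.castSucc ⟨j, h1⟩ := rfl
      rw [h2, Fin.snoc_castSucc]
    · subst h1
      rw [if_pos rfl, dif_pos (by omega : M + 2 < M + 3)]
      have h2 : (⟨M + 2, by omega⟩ : Fin (M + 3)) = Fin.last (M + 2) := rfl
      rw [h2, Fin.snoc_last]
    · rw [dif_neg (by omega), dif_neg (by omega), if_neg (by omega)]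
  have hE : (∑ k ∈ Finset.Icc 1 (M + 1), (k : ℤ) *
        |sfun (Fin.snoc τ x : Fin (M + 3) → Fin (r - 1)) (k + 1)
          - sfun (Fin.snoc τ x : Fin (M + 3) → Fin (r - 1)) (k - 1)|)
      = (∑ k ∈ Finset.Icc 1 M, (k : ℤ) * |sfun τ (k + 1) - sfun τ (k - 1)|)
        + ((M + 1 : ℕ) : ℤ) * |((x : ℕ) : ℤ) - sfun τ M| := by
    rw [Finset.sum_Icc_succ_top (by omega : 1 ≤ M + 1)]
    congr 1
    · refine Finset.sum_congr rfl fun k hk => ?_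
      simp only [Finset.mem_Icc] at hk
      rw [hs, hs, if_neg (by omega), if_neg (by omega)]
    · rw [hs, hs, if_pos (by omega), if_neg (by omega)]
      norm_num
  have hsM2 : sfun (Fin.snoc τ x : Fin (M + 3) → Fin (r - 1)) (M + 1 + 1) = ((x : ℕ) : ℤ) := by
    rw [hs, if_pos (by omega)]
  have hsM1 : sfun (Fin.snoc τ x : Fin (M + 3) → Fin (r - 1)) (M + 1) = sfun τ (M + 1) := by
    rw [hs, if_neg (by omega)]
  have hs0 : sfun (Fin.snoc τ x : Fin (M + 3) → Fin (r - 1)) 0 = sfun τ 0 := by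
    rw [hs, if_neg (by omega)]
  unfold cterm
  by_cases hx : (x : ℕ) = b
  · rw [if_pos hx]
    have hxz : ((x : ℕ) : ℤ) = (b : ℤ) := by exact_mod_cast hx
    by_cases hcom : (∀ j, j ≤ M → |sfun τ (j + 1) - sfun τ j| = 1)
        ∧ sfun τ 0 = (a : ℤ) - 1 ∧ sfun τ (M + 1) = (b : ℤ) - 1
    · obtain ⟨h1, h2, h3⟩ := hcom
      have hCσ : (∀ j, j ≤ M + 1 →
            |sfun (Fin.snoc τ x : Fin (M + 3) → Fin (r - 1)) (j + 1)
              - sfun (Fin.snoc τ x : Fin (M + 3) → Fin (r - 1)) j| = 1)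
          ∧ sfun (Fin.snoc τ x : Fin (M + 3) → Fin (r - 1)) 0 = (a : ℤ) - 1
          ∧ sfun (Fin.snoc τ x : Fin (M + 3) → Fin (r - 1)) (M + 1) = (b : ℤ) - 1
          ∧ sfun (Fin.snoc τ x : Fin (M + 3) → Fin (r - 1)) (M + 1 + 1) = ((b + 1 : ℕ) : ℤ) - 1 := by
        refine ⟨fun j hj => ?_, by rwa [hs0], by rwa [hsM1],
          by rw [hsM2, hxz]; push_cast; ring⟩
        rcases Nat.lt_or_ge j (M + 1) with hj' | hj'
        · rw [hs, if_neg (by omega), hs, if_neg (by omega)]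
          exact h1 j (by omega)
        · have hje : j = M + 1 := by omega
          subst hje
          rw [hsM2, hsM1, h3, hxz]
          have : (b : ℤ) - ((b : ℤ) - 1) = 1 := by ring
          rw [this, abs_one]
      rw [if_pos hCσ]
      have hstep : |sfun τ (M + 1) - sfun τ M| = 1 := h1 M le_rfl
      rw [h3] at hstep
      have hcases : sfun τ M = (b : ℤ) ∨ sfun τ M = (b : ℤ) - 2 := by
        rcases (abs_eq (by norm_num : (0:ℤ) ≤ 1)).mp hstep with h | h
        · right; omega
        · left; omega
      rcases hcases with hM | hM
      · -- C1 holds, C2 fails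
        have hC1 : (∀ j, j ≤ M → |sfun τ (j + 1) - sfun τ j| = 1)
            ∧ sfun τ 0 = (a : ℤ) - 1 ∧ sfun τ M = ((b + 1 : ℕ) : ℤ) - 1
            ∧ sfun τ (M + 1) = (b : ℤ) - 1 := by
          exact ⟨h1, h2, by rw [hM]; push_cast; ring, h3⟩
        have hC2 : ¬ ((∀ j, j ≤ M → |sfun τ (j + 1) - sfun τ j| = 1)
            ∧ sfun τ 0 = (a : ℤ) - 1 ∧ sfun τ M = ((b - 1 : ℕ) : ℤ) - 1
            ∧ sfun τ (M + 1) = (b : ℤ) - 1) := by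
          rintro ⟨-, -, h, -⟩
          rw [hM, Nat.cast_sub hb] at h
          omega
        rw [if_pos hC1, if_neg hC2, mul_zero, add_zero, hE, hxz, hM]
        have : |(b : ℤ) - (b : ℤ)| = 0 := by norm_num
        rw [this, mul_zero, add_zero]
      · -- C2 holds, C1 fails
        have hC2 : (∀ j, j ≤ M → |sfun τ (j + 1) - sfun τ j| = 1)
            ∧ sfun τ 0 = (a : ℤ) - 1 ∧ sfun τ M = ((b - 1 : ℕ) : ℤ) - 1
            ∧ sfun τ (M + 1) = (b : ℤ) - 1 := by
          exact ⟨h1, h2, by rw [hM, Nat.cast_sub hb]; ring, h3⟩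
        have hC1 : ¬ ((∀ j, j ≤ M → |sfun τ (j + 1) - sfun τ j| = 1)
            ∧ sfun τ 0 = (a : ℤ) - 1 ∧ sfun τ M = ((b + 1 : ℕ) : ℤ) - 1
            ∧ sfun τ (M + 1) = (b : ℤ) - 1) := by
          rintro ⟨-, -, h, -⟩
          rw [hM] at h
          push_cast at h
          omega
        rw [if_neg hC1, if_pos hC2, zero_add, hE, hxz, hM]
        have h2' : |(b : ℤ) - ((b : ℤ) - 2)| = 2 := by norm_num
        rw [h2']
        rw [show ((M + 1 : ℕ) : ℤ) * 2 = ((2 * (M + 1) : ℕ) : ℤ) by push_cast; ring]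
        rw [zpow_add₀ (RatFunc.X_ne_zero) _ _, zpow_natCast, mul_comm]
    · -- common fails: all three zero
      have hCσ : ¬ ((∀ j, j ≤ M + 1 →
            |sfun (Fin.snoc τ x : Fin (M + 3) → Fin (r - 1)) (j + 1)
              - sfun (Fin.snoc τ x : Fin (M + 3) → Fin (r - 1)) j| = 1)
          ∧ sfun (Fin.snoc τ x : Fin (M + 3) → Fin (r - 1)) 0 = (a : ℤ) - 1
          ∧ sfun (Fin.snoc τ x : Fin (M + 3) → Fin (r - 1)) (M + 1) = (b : ℤ) - 1
          ∧ sfun (Fin.snoc τ x : Fin (M + 3) → Fin (r - 1)) (M + 1 + 1) = ((b + 1 : ℕ) : ℤ) - 1) := by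
        rintro ⟨h1, h2, h3, h4⟩
        refine hcom ⟨fun j hj => ?_, by rwa [hs0] at h2, by rwa [hsM1] at h3⟩
        have := h1 j (by omega)
        rwa [hs, if_neg (by omega), hs, if_neg (by omega)] at this
      have hC1 : ¬ ((∀ j, j ≤ M → |sfun τ (j + 1) - sfun τ j| = 1)
          ∧ sfun τ 0 = (a : ℤ) - 1 ∧ sfun τ M = ((b + 1 : ℕ) : ℤ) - 1
          ∧ sfun τ (M + 1) = (b : ℤ) - 1) := by
        rintro ⟨h1, h2, -, h4⟩; exact hcom ⟨h1, h2, h4⟩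
      have hC2 : ¬ ((∀ j, j ≤ M → |sfun τ (j + 1) - sfun τ j| = 1)
          ∧ sfun τ 0 = (a : ℤ) - 1 ∧ sfun τ M = ((b - 1 : ℕ) : ℤ) - 1
          ∧ sfun τ (M + 1) = (b : ℤ) - 1) := by
        rintro ⟨h1, h2, -, h4⟩; exact hcom ⟨h1, h2, h4⟩
      rw [if_neg hCσ, if_neg hC1, if_neg hC2, mul_zero, add_zero]
  · rw [if_neg hx]
    refine if_neg ?_
    rintro ⟨-, -, -, h4⟩
    rw [hsM2] at h4
    apply hx
    have : ((x : ℕ) : ℤ) = (b : ℤ) := by push_cast at h4; omega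
    exact_mod_cast this

def snocEquiv (n m : ℕ) : ((Fin n → Fin m) × Fin m) ≃ (Fin (n + 1) → Fin m) :=
  { toFun := fun p => Fin.snoc p.1 p.2
    invFun := fun σ => (Fin.init σ, σ (Fin.last n))
    left_inv := fun p => by simp
    right_inv := fun σ => by simp }

lemma conf_eq_cterm (r L a b c : ℕ) : conf r L a b c = ∑ σ, cterm r L a b c σ := rfl

/-- The recurrence `X_L(a,b) = Y_{L-1}(a,b+1) + q^{L/2} X_{L-1}(a,b-1)`, with the
convention `X_{L-1}(a,0) = 0`; here `X_L(a,b) = conf r L a b (b+1)` and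
`Y_L(a,b) = conf r L a b (b-1)`, stated in the variable `t = q^{1/4}`. -/
theorem conf_recurrence_X (r a b L : ℕ) (hr : 3 ≤ r) (ha : 1 ≤ a) (ha' : a ≤ r - 1)
    (hb : 1 ≤ b) (hb' : b ≤ r - 2) (hL : 1 ≤ L) :
    conf r L a b (b + 1)
      = conf r (L - 1) a (b + 1) b
        + (RatFunc.X : RatFunc ℚ) ^ (2 * L) * conf r (L - 1) a (b - 1) b := by
  obtain ⟨M, rfl⟩ : ∃ M, L = M + 1 := ⟨L - 1, by omega⟩
  have hb1 : b < r - 1 := by omega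
  rw [conf_eq_cterm, conf_eq_cterm, conf_eq_cterm]
  show (∑ σ : Fin (M + 3) → Fin (r - 1), cterm r (M + 1) a b (b + 1) σ)
      = (∑ τ : Fin (M + 2) → Fin (r - 1), cterm r M a (b + 1) b τ)
        + (RatFunc.X : RatFunc ℚ) ^ (2 * (M + 1))
          * ∑ τ : Fin (M + 2) → Fin (r - 1), cterm r M a (b - 1) b τ
  rw [← Equiv.sum_comp (snocEquiv (M + 2) (r - 1)) (cterm r (M + 1) a b (b + 1)), Fintype.sum_prod_type]
  have key : ∀ τ : Fin (M + 2) → Fin (r - 1),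
      (∑ x : Fin (r - 1), cterm r (M + 1) a b (b + 1) (snocEquiv (M + 2) (r - 1) (τ, x)))
        = cterm r M a (b + 1) b τ
          + (RatFunc.X : RatFunc ℚ) ^ (2 * (M + 1)) * cterm r M a (b - 1) b τ := by
    intro τ
    have h1 : ∀ x : Fin (r - 1), cterm r (M + 1) a b (b + 1) (snocEquiv (M + 2) (r - 1) (τ, x))
        = if x = (⟨b, hb1⟩ : Fin (r - 1)) then
            cterm r M a (b + 1) b τ
              + (RatFunc.X : RatFunc ℚ) ^ (2 * (M + 1)) * cterm r M a (b - 1) b τ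
          else 0 := by
      intro x
      rw [show snocEquiv (M + 2) (r - 1) (τ, x) = Fin.snoc τ x from rfl, cterm_snoc r M a b hb hb1 τ x]
      exact if_congr (by simp [Fin.ext_iff]) rfl rfl
    rw [Finset.sum_congr rfl fun x _ => h1 x, Finset.sum_ite_eq' Finset.univ]
    simp
  rw [Finset.sum_congr rfl fun τ _ => key τ, Finset.sum_add_distrib, ← Finset.mul_sum]
end
end

section
/- For all integers r ≥ 3, a ∈ {1,…,r−1}, b ∈ {2,…,r−1} and L ≥ 1, the configuration sums satisfy the recurrence Y_L(a,b) = X_{L−1}(a,b−1) + q^{L/2} Y_{L−1}(a,b+1), where by convention Y_{L−1}(a,r) = 0. -/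
attribute [local instance] Classical.propDecidable

noncomputable section

variable {K : Type*} [Field K]

/-! ### Auxiliary lemmas for the recurrence -/

/-- extension of a tuple to `ℕ → ℤ` by zero. -/
def ext {m d : ℕ} (σ : Fin m → Fin d) : ℕ → ℤ :=
  fun j => if h : j < m then ((σ ⟨j, h⟩ : ℕ) : ℤ) else 0

/-- the summand of `conf`. -/
def term (L a b c : ℕ) (s : ℕ → ℤ) : RatFunc ℚ :=
  if (∀ j, j ≤ L → |s (j + 1) - s j| = 1) ∧
      s 0 = (a : ℤ) - 1 ∧ s L = (b : ℤ) - 1 ∧ s (L + 1) = (c : ℤ) - 1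
  then (RatFunc.X : RatFunc ℚ) ^ (∑ k ∈ Finset.Icc 1 L, (k : ℤ) * |s (k + 1) - s (k - 1)|)
  else 0

lemma conf_eq (r L a b c : ℕ) :
    conf r L a b c = ∑ σ : Fin (L + 2) → Fin (r - 1), term L a b c (ext σ) := rfl

lemma ext_lt {m d : ℕ} (σ : Fin m → Fin d) {j : ℕ} (h : j < m) :
    ext σ j = ((σ ⟨j, h⟩ : ℕ) : ℤ) := dif_pos h

lemma ext_snoc_lt {m d : ℕ} (τ : Fin m → Fin d) (v : Fin d) {j : ℕ} (hj : j < m) :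
    ext (Fin.snoc τ v) j = ext τ j := by
  rw [ext_lt (Fin.snoc τ v) (Nat.lt_succ_of_lt hj), ext_lt τ hj]
  have h : (⟨j, Nat.lt_succ_of_lt hj⟩ : Fin (m + 1)) = Fin.castSucc ⟨j, hj⟩ := rfl
  rw [h, Fin.snoc_castSucc]

lemma ext_snoc_last {m d : ℕ} (τ : Fin m → Fin d) (v : Fin d) :
    ext (Fin.snoc τ v) m = ((v : ℕ) : ℤ) := by
  rw [ext_lt _ (Nat.lt_succ_self m)]
  have h : (⟨m, Nat.lt_succ_self m⟩ : Fin (m + 1)) = Fin.last m := rfl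
  rw [h, Fin.snoc_last]

lemma sum_snoc_eq {β : Type*} [AddCommMonoid β] {m d : ℕ}
    (F : (Fin (m + 1) → Fin d) → β) (v₀ : Fin d)
    (h0 : ∀ σ, σ (Fin.last m) ≠ v₀ → F σ = 0) :
    ∑ σ : Fin (m + 1) → Fin d, F σ = ∑ τ : Fin m → Fin d, F (Fin.snoc τ v₀) := by
  have e : (∑ σ : Fin (m + 1) → Fin d, F σ)
      = ∑ p : Fin d × (Fin m → Fin d), F (Fin.snoc p.2 p.1) := by
    refine Fintype.sum_equiv (Fin.snocEquiv fun _ => Fin d).symm _ _ fun σ => ?_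
    simp [Fin.snocEquiv, Fin.snoc_init_self]
  rw [e, Fintype.sum_prod_type]
  rw [Finset.sum_eq_single v₀]
  · intro v _ hv
    exact Finset.sum_eq_zero fun τ _ => h0 _ (by simpa [Fin.snoc_last] using hv)
  · intro h; exact absurd (Finset.mem_univ v₀) h

lemma key (r a b n : ℕ) (hb : 2 ≤ b) (hrb : b - 2 < r - 1)
    (τ : Fin (n + 2) → Fin (r - 1)) :
    term (n + 1) a b (b - 1) (ext (Fin.snoc τ (⟨b - 2, hrb⟩ : Fin (r - 1))))
      = term n a (b - 1) b (ext τ)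
        + (RatFunc.X : RatFunc ℚ) ^ (2 * (n + 1)) * term n a (b + 1) b (ext τ) := by
  set v₀ : Fin (r - 1) := ⟨b - 2, hrb⟩ with hv₀def
  set s := ext (Fin.snoc τ v₀) with hsdef
  set t := ext τ with htdef
  have hs : ∀ j, j < n + 2 → s j = t j := fun j hj => ext_snoc_lt τ v₀ hj
  have hvcast : ((v₀ : ℕ) : ℤ) = (b : ℤ) - 2 := by
    have : (v₀ : ℕ) = b - 2 := rfl
    rw [this]; omega
  have hslast : ∀ j, j = n + 2 → s j = (b : ℤ) - 2 := by
    rintro j rfl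
    rw [hsdef]
    exact (ext_snoc_last τ v₀).trans hvcast
  have hcast1 : ((b - 1 : ℕ) : ℤ) - 1 = (b : ℤ) - 2 := by omega
  have hcast2 : ((b + 1 : ℕ) : ℤ) - 1 = (b : ℤ) := by push_cast; ring
  unfold term
  by_cases hC : (∀ j, j ≤ n + 1 → |s (j + 1) - s j| = 1) ∧
      s 0 = (a : ℤ) - 1 ∧ s (n + 1) = (b : ℤ) - 1 ∧ s (n + 1 + 1) = ((b - 1 : ℕ) : ℤ) - 1
  · rw [if_pos hC]
    obtain ⟨h1, h2, h3, _⟩ := hC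
    have ht0 : t 0 = (a : ℤ) - 1 := by rw [← hs 0 (by omega)]; exact h2
    have htn1 : t (n + 1) = (b : ℤ) - 1 := by rw [← hs (n + 1) (by omega)]; exact h3
    have hall : ∀ j, j ≤ n → |t (j + 1) - t j| = 1 := by
      intro j hj
      rw [← hs (j + 1) (by omega), ← hs j (by omega)]
      exact h1 j (by omega)
    have htn : t n = (b : ℤ) - 2 ∨ t n = (b : ℤ) := by
      have h := hall n le_rfl
      rw [htn1] at h
      rcases abs_cases ((b : ℤ) - 1 - t n) with ⟨h1', h2'⟩ | ⟨h1', h2'⟩ <;> omega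
    have hEtop : s (n + 1 + 1) - s (n + 1 - 1) = ((b : ℤ) - 2) - t n := by
      rw [hslast (n + 1 + 1) rfl, hs (n + 1 - 1) (by omega)]
      rfl
    have hsum : (∑ k ∈ Finset.Icc 1 (n + 1), (k : ℤ) * |s (k + 1) - s (k - 1)|)
        = (∑ k ∈ Finset.Icc 1 n, (k : ℤ) * |t (k + 1) - t (k - 1)|)
          + ((n + 1 : ℕ) : ℤ) * |s (n + 1 + 1) - s (n + 1 - 1)| := by
      rw [Finset.sum_Icc_succ_top (by omega : 1 ≤ n + 1)]
      congr 1
      refine Finset.sum_congr rfl fun k hk => ?_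
      rw [Finset.mem_Icc] at hk
      rw [hs (k + 1) (by omega), hs (k - 1) (by omega)]
    rw [hsum, hEtop]
    rcases htn with h | h
    · have hC1 : (∀ j, j ≤ n → |t (j + 1) - t j| = 1) ∧
          t 0 = (a : ℤ) - 1 ∧ t n = ((b - 1 : ℕ) : ℤ) - 1 ∧ t (n + 1) = (b : ℤ) - 1 :=
        ⟨hall, ht0, by rw [hcast1]; exact h, htn1⟩
      have hC2 : ¬((∀ j, j ≤ n → |t (j + 1) - t j| = 1) ∧
          t 0 = (a : ℤ) - 1 ∧ t n = ((b + 1 : ℕ) : ℤ) - 1 ∧ t (n + 1) = (b : ℤ) - 1) := by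
        rintro ⟨-, -, h3', -⟩
        rw [hcast2] at h3'
        omega
      rw [if_pos hC1, if_neg hC2, h]
      simp
    · have hC1 : ¬((∀ j, j ≤ n → |t (j + 1) - t j| = 1) ∧
          t 0 = (a : ℤ) - 1 ∧ t n = ((b - 1 : ℕ) : ℤ) - 1 ∧ t (n + 1) = (b : ℤ) - 1) := by
        rintro ⟨-, -, h3', -⟩
        rw [hcast1] at h3'
        omega
      have hC2 : (∀ j, j ≤ n → |t (j + 1) - t j| = 1) ∧
          t 0 = (a : ℤ) - 1 ∧ t n = ((b + 1 : ℕ) : ℤ) - 1 ∧ t (n + 1) = (b : ℤ) - 1 :=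
        ⟨hall, ht0, by rw [hcast2]; exact h, htn1⟩
      rw [if_neg hC1, if_pos hC2, h]
      have habs : |(b : ℤ) - 2 - (b : ℤ)| = 2 := by
        rw [show (b : ℤ) - 2 - (b : ℤ) = -2 by ring]
        norm_num
      rw [habs, zero_add, ← zpow_natCast (RatFunc.X : RatFunc ℚ) (2 * (n + 1)),
        ← zpow_add₀ RatFunc.X_ne_zero]
      congr 1
      push_cast
      ring
  · rw [if_neg hC]
    have himp : ¬((∀ j, j ≤ n → |t (j + 1) - t j| = 1) ∧
        t 0 = (a : ℤ) - 1 ∧ t (n + 1) = (b : ℤ) - 1) := by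
      rintro ⟨h1, h2, h3⟩
      apply hC
      refine ⟨?_, ?_, ?_, ?_⟩
      · intro j hj
        by_cases hj' : j ≤ n
        · rw [hs (j + 1) (by omega), hs j (by omega)]
          exact h1 j hj'
        · have hjj : j = n + 1 := by omega
          subst hjj
          rw [hslast (n + 1 + 1) rfl, hs (n + 1) (by omega), h3]
          rw [show (b : ℤ) - 2 - ((b : ℤ) - 1) = -1 by ring]
          norm_num
      · rw [hs 0 (by omega)]; exact h2
      · rw [hs (n + 1) (by omega)]; exact h3
      · rw [hslast (n + 1 + 1) rfl]; omega
    rw [if_neg, if_neg]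
    · simp
    · rintro ⟨h1', h2', -, h4'⟩; exact himp ⟨h1', h2', h4'⟩
    · rintro ⟨h1', h2', -, h4'⟩; exact himp ⟨h1', h2', h4'⟩

/-- The recurrence `Y_L(a,b) = X_{L-1}(a,b-1) + q^{L/2} Y_{L-1}(a,b+1)`, with the
convention `Y_{L-1}(a,r) = 0`; here `X_L(a,b) = conf r L a b (b+1)` and
`Y_L(a,b) = conf r L a b (b-1)`, stated in the variable `t = q^{1/4}`. -/

theorem conf_recurrence_Y (r a b L : ℕ) (hr : 3 ≤ r) (ha : 1 ≤ a) (ha' : a ≤ r - 1)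
    (hb : 2 ≤ b) (hb' : b ≤ r - 1) (hL : 1 ≤ L) :
    conf r L a b (b - 1)
      = conf r (L - 1) a (b - 1) b
        + (RatFunc.X : RatFunc ℚ) ^ (2 * L) * conf r (L - 1) a (b + 1) b := by
  obtain ⟨n, rfl⟩ : ∃ n, L = n + 1 := ⟨L - 1, (Nat.succ_pred_eq_of_pos hL).symm⟩
  have hrb : b - 2 < r - 1 := by omega
  simp only [conf_eq, Nat.add_sub_cancel]
  have h0 : ∀ σ : Fin (n + 3) → Fin (r - 1),
      σ (Fin.last (n + 2)) ≠ (⟨b - 2, hrb⟩ : Fin (r - 1)) →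
      term (n + 1) a b (b - 1) (ext σ) = 0 := by
    intro σ hσ
    unfold term
    rw [if_neg]
    rintro ⟨-, -, -, h4⟩
    apply hσ
    have hl : ext σ (n + 1 + 1) = ((σ (Fin.last (n + 2)) : ℕ) : ℤ) := by
      rw [ext_lt σ (show n + 1 + 1 < n + 3 by omega)]
      rfl
    rw [hl] at h4
    have hval : (σ (Fin.last (n + 2)) : ℕ) = b - 2 := by omega
    exact Fin.ext hval
  have h1 : (∑ σ : Fin (n + 1 + 2) → Fin (r - 1), term (n + 1) a b (b - 1) (ext σ))
      = ∑ τ : Fin (n + 2) → Fin (r - 1),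
          term (n + 1) a b (b - 1) (ext (Fin.snoc τ (⟨b - 2, hrb⟩ : Fin (r - 1)))) :=
    sum_snoc_eq (m := n + 2) (d := r - 1)
      (fun σ => term (n + 1) a b (b - 1) (ext σ)) ⟨b - 2, hrb⟩ h0
  rw [h1]
  have h2 : (∑ τ : Fin (n + 2) → Fin (r - 1),
        term (n + 1) a b (b - 1) (ext (Fin.snoc τ (⟨b - 2, hrb⟩ : Fin (r - 1)))))
      = ∑ τ : Fin (n + 2) → Fin (r - 1),
          (term n a (b - 1) b (ext τ)
            + (RatFunc.X : RatFunc ℚ) ^ (2 * (n + 1)) * term n a (b + 1) b (ext τ)) :=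
    Finset.sum_congr rfl fun τ _ => key r a b n hb hrb τ
  rw [h2, Finset.sum_add_distrib, ← Finset.mul_sum]
end
end
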